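/- arXiv:2501.05850 — 11 statements merged into one kernel-verified Lean document; each statement's English description precedes it below -/
import Mathlib

section
/- For every integer k ≥ 1 there exists a real nonassociative algebra with unit whose dimension over ℝ equals 2k + 2 and which is partially alternative but not alternative. -/
/-!
Let `V` be a complex inner product space and put on `ℂ × V` the product
`(a, v) (b, w) = (a b + ⟪v, w⟫, a w + b v)`, a hermitian analogue of the spin factor.
Since `⟪v, v⟫ = ‖v‖² ≥ 0`, the imaginary units are the elements `(a, 0)` with `a² = -1`, and every
`(a, 0)` acts on both sides as multiplication by the complex scalar `a`, so its associators vanish.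
The inner product is conjugate-linear in its first slot, however, so for `x = (i, v)`, `y = (0, v)`
the associator `(x, x, y)` has first component `-4 i ‖v‖²`, which is nonzero as soon as `v ≠ 0`.
Taking `V = ℂᵏ` gives real dimension `2k + 2`.
-/

/-- The associator of a nonassociative algebra: `(x, y, z) = (xy)z - x(yz)`. -/
def assocator {A : Type*} [NonAssocRing A] (x y z : A) : A :=
  x * y * z - x * (y * z)

/-- An imaginary unit is an element `q` with `q² = -1`. -/
def IsImgUnit {A : Type*} [NonAssocRing A] (q : A) : Prop := q * q = -1

/-- A real nonassociative unital algebra is partially alternative if it has an imaginary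
unit and all associators `(x,x,y)`, `(x,y,x)`, `(y,x,x)` vanish for `x` an imaginary unit. -/
def IsPartiallyAlternative (A : Type*) [NonAssocRing A] : Prop :=
  (∃ q : A, IsImgUnit q) ∧
    ∀ x : A, IsImgUnit x → ∀ y : A,
      assocator x x y = 0 ∧ assocator x y x = 0 ∧ assocator y x x = 0

/-- Alternative algebra: `(x,x,y) = (y,x,x) = 0` for all `x, y`. -/
def IsAlternative (A : Type*) [NonAssocRing A] : Prop :=
  ∀ x y : A, assocator x x y = 0 ∧ assocator y x x = 0

open ComplexConjugate

def HermitianSpinFactor (V : Type*) : Type _ := ℂ × V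

namespace HermitianSpinFactor

variable {V : Type*}

def mk (a : ℂ) (v : V) : HermitianSpinFactor V := (a, v)

@[simp] lemma fst_mk (a : ℂ) (v : V) : (mk a v).1 = a := rfl
@[simp] lemma snd_mk (a : ℂ) (v : V) : (mk a v).2 = v := rfl

@[ext] lemma ext {x y : HermitianSpinFactor V} (h₁ : x.1 = y.1) (h₂ : x.2 = y.2) :
    x = y :=
  Prod.ext h₁ h₂

section AddCommGroup

variable [AddCommGroup V]

instance : AddCommGroup (HermitianSpinFactor V) := inferInstanceAs (AddCommGroup (ℂ × V))

instance : One (HermitianSpinFactor V) := ⟨((1 : ℂ), 0)⟩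

variable (x y : HermitianSpinFactor V)

@[simp] lemma fst_add : (x + y).1 = x.1 + y.1 := rfl
@[simp] lemma snd_add : (x + y).2 = x.2 + y.2 := rfl
@[simp] lemma fst_sub : (x - y).1 = x.1 - y.1 := rfl
@[simp] lemma snd_sub : (x - y).2 = x.2 - y.2 := rfl
@[simp] lemma fst_neg : (-x).1 = -x.1 := rfl
@[simp] lemma snd_neg : (-x).2 = -x.2 := rfl
@[simp] lemma fst_zero : (0 : HermitianSpinFactor V).1 = 0 := rfl
@[simp] lemma snd_zero : (0 : HermitianSpinFactor V).2 = 0 := rfl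
@[simp] lemma fst_one : (1 : HermitianSpinFactor V).1 = 1 := rfl
@[simp] lemma snd_one : (1 : HermitianSpinFactor V).2 = 0 := rfl

end AddCommGroup

section Module

variable [AddCommGroup V] [Module ℂ V]

noncomputable instance : Module ℝ (HermitianSpinFactor V) := inferInstanceAs (Module ℝ (ℂ × V))

@[simp] lemma fst_smul (r : ℝ) (x : HermitianSpinFactor V) : (r • x).1 = r • x.1 := rfl
@[simp] lemma snd_smul (r : ℝ) (x : HermitianSpinFactor V) : (r • x).2 = r • x.2 := rfl

lemma finrank_eq [Module.Finite ℂ V] :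
    Module.finrank ℝ (HermitianSpinFactor V) = 2 * Module.finrank ℂ V + 2 := by
  rw [show Module.finrank ℝ (HermitianSpinFactor V) = Module.finrank ℝ (ℂ × V) from rfl,
    Module.finrank_prod, Complex.finrank_real_complex, finrank_real_of_complex, add_comm]

end Module

variable [NormedAddCommGroup V] [InnerProductSpace ℂ V]

noncomputable instance : Mul (HermitianSpinFactor V) :=
  ⟨fun x y => (x.1 * y.1 + inner ℂ x.2 y.2, x.1 • y.2 + y.1 • x.2)⟩

@[simp] lemma fst_mul (x y : HermitianSpinFactor V) : (x * y).1 = x.1 * y.1 + inner ℂ x.2 y.2 :=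
  rfl
@[simp] lemma snd_mul (x y : HermitianSpinFactor V) : (x * y).2 = x.1 • y.2 + y.1 • x.2 := rfl

noncomputable instance : NonAssocRing (HermitianSpinFactor V) where
  left_distrib x y z := by
    ext <;>
      simp only [fst_mul, snd_mul, fst_add, snd_add, mul_add, smul_add, add_smul, inner_add_right] <;>
      abel
  right_distrib x y z := by
    ext <;>
      simp only [fst_mul, snd_mul, fst_add, snd_add, add_mul, smul_add, add_smul, inner_add_left] <;>
      abel
  zero_mul x := by ext <;> simp
  mul_zero x := by ext <;> simp
  one_mul x := by ext <;> simp
  mul_one x := by ext <;> simp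

instance : SMulCommClass ℝ (HermitianSpinFactor V) (HermitianSpinFactor V) where
  smul_comm r x y := by
    simp only [smul_eq_mul]
    ext
    · simp only [fst_mul, fst_smul, snd_smul, inner_smul_right_eq_smul, smul_add, mul_smul_comm]
    · simp only [snd_mul, fst_smul, snd_smul, smul_add, smul_assoc, smul_comm r]

instance : IsScalarTower ℝ (HermitianSpinFactor V) (HermitianSpinFactor V) where
  smul_assoc r x y := by
    simp only [smul_eq_mul]
    ext
    · simp only [fst_mul, fst_smul, snd_smul, inner_smul_left_eq_smul, smul_add, smul_mul_assoc]
    · simp only [snd_mul, fst_smul, snd_smul, smul_add, smul_assoc, smul_comm r]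

lemma snd_eq_zero_of_isImgUnit {x : HermitianSpinFactor V} (hx : IsImgUnit x) : x.2 = 0 := by
  have h₁ : x.1 * x.1 + inner ℂ x.2 x.2 = -1 := by simpa using congrArg Prod.fst hx
  have h₂ : (2 * x.1) • x.2 = 0 := by simpa [two_mul, add_smul] using congrArg Prod.snd hx
  by_contra hv
  have ha : x.1 = 0 := by simpa [hv] using h₂
  rw [ha, zero_mul, zero_add, inner_self_eq_norm_sq_to_K] at h₁
  have hnorm : ‖x.2‖ ^ 2 = (-1 : ℝ) := Complex.ofReal_injective (by push_cast; exact h₁)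
  linarith [sq_nonneg ‖x.2‖]

lemma assocator_eq_zero_of_snd_eq_zero {x : HermitianSpinFactor V} (hx : x.2 = 0)
    (y : HermitianSpinFactor V) :
    assocator x x y = 0 ∧ assocator x y x = 0 ∧ assocator y x x = 0 := by
  refine ⟨?_, ?_, ?_⟩ <;> ext <;>
    simp only [assocator, fst_sub, snd_sub, fst_mul, snd_mul, fst_zero, snd_zero, hx,
      inner_zero_left, inner_zero_right, smul_zero, add_zero, zero_add, smul_smul, sub_self] <;>
    ring

lemma fst_assocator_mk_mk_mk_zero (a : ℂ) (v : V) :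
    (assocator (mk a v) (mk a v) (mk 0 v)).1 = 2 * (conj a - a) * inner ℂ v v := by
  simp only [assocator, fst_sub, fst_mul, snd_mul, fst_mk, snd_mk, mul_zero, zero_add, add_zero,
    zero_smul, inner_add_left, inner_smul_left, inner_smul_right]
  ring

theorem isPartiallyAlternative : IsPartiallyAlternative (HermitianSpinFactor V) :=
  ⟨⟨mk Complex.I 0, by ext <;> simp⟩,
    fun _ hx y => assocator_eq_zero_of_snd_eq_zero (snd_eq_zero_of_isImgUnit hx) y⟩

theorem not_isAlternative [Nontrivial V] : ¬ IsAlternative (HermitianSpinFactor V) := by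
  intro h
  obtain ⟨v, hv⟩ := exists_ne (0 : V)
  have hfst := congrArg Prod.fst (h (mk Complex.I v) (mk 0 v)).1
  rw [fst_assocator_mk_mk_mk_zero, fst_zero] at hfst
  have hI : conj Complex.I - Complex.I ≠ 0 := by
    rw [Complex.conj_I]
    norm_num [Complex.ext_iff]
  simp only [mul_eq_zero, two_ne_zero, hI, inner_self_eq_zero, false_or] at hfst
  exact hv hfst

end HermitianSpinFactor

/-- For every `k ≥ 1` there is a real nonassociative unital algebra of dimension `2k + 2`
that is partially alternative but not alternative. -/
theorem exists_partiallyAlternative_not_alternative (k : ℕ) (hk : 1 ≤ k) :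
    ∃ (A : Type) (_ : NonAssocRing A) (_ : Module ℝ A) (_ : SMulCommClass ℝ A A)
      (_ : IsScalarTower ℝ A A),
      Module.finrank ℝ A = 2 * k + 2 ∧ IsPartiallyAlternative A ∧ ¬ IsAlternative A := by
  have : Nonempty (Fin k) := ⟨⟨0, hk⟩⟩
  refine ⟨HermitianSpinFactor (EuclideanSpace ℂ (Fin k)), inferInstance, inferInstance,
    inferInstance, inferInstance, ?_, HermitianSpinFactor.isPartiallyAlternative,
    HermitianSpinFactor.not_isAlternative⟩
  rw [HermitianSpinFactor.finrank_eq, finrank_euclideanSpace_fin]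
end

section
/- Let A be a commutative associative real algebra with unit 1, and let i, g ∈ A satisfy i² = −1 and g² = −1, with 1, i, g linearly independent over ℝ. Then the product ig does not lie in the linear span of {1, i, g}. -/
/-- If `A` is a commutative associative real unital algebra and `i, g ∈ A` satisfy
`i² = g² = -1` with `1, i, g` linearly independent over `ℝ`, then `ig` does not lie in
`span ℝ {1, i, g}`. -/
theorem mul_not_mem_span_of_imaginary_units {A : Type*} [CommRing A] [Algebra ℝ A]
    (i g : A) (hi : i * i = -1) (hg : g * g = -1)
    (hli : LinearIndependent ℝ ![(1 : A), i, g]) :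
    i * g ∉ Submodule.span ℝ ({1, i, g} : Set A) := by
  intro h
  rw [Submodule.mem_span_insert] at h
  obtain ⟨a, y, hy, hrep⟩ := h
  rw [Submodule.mem_span_insert] at hy
  obtain ⟨b, z, hz, hyrep⟩ := hy
  rw [Submodule.mem_span_singleton] at hz
  obtain ⟨c, rfl⟩ := hz
  subst hyrep
  -- i * (i*g) = -g
  have key : (c * a - b) • (1 : A) + (a + c * b) • i + (c * c + 1) • g = 0 := by
    have h1 : i * (a • (1 : A) + (b • i + c • g)) = i * (i * g) := by rw [hrep]
    have h2 : i * (i * g) = -g := by rw [← mul_assoc, hi]; ring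
    rw [h2] at h1
    have h3 : i * (a • (1 : A) + (b • i + c • g))
        = a • i + b • (i * i) + c • (i * g) := by
      simp [mul_add, mul_smul_comm]; ring
    rw [hi] at h3
    rw [h3] at h1
    have hig : i * g = a • (1 : A) + (b • i + c • g) := hrep
    rw [hig] at h1
    rw [smul_add, smul_add] at h1
    simp only [smul_smul, smul_neg, smul_one] at h1 ⊢
    -- h1 : a • i + b • (-1) + (c*a • 1 + (c*b • i + c*c • g)) = -g
    have := h1
    -- rearrange
    linear_combination (norm := module) h1
  have hcoe := Fintype.linearIndependent_iff.mp hli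
    ![c * a - b, a + c * b, c * c + 1] (by
      simpa [Fin.sum_univ_three] using key)
  have := hcoe 2
  simp at this
  nlinarith [sq_nonneg c]
end

section
/- Let M be a real nonassociative algebra with unit having a basis {1, i, j, k} whose multiplication is given by table (Tn) with parameters a, b, c, d, f, g, h, e ∈ ℝ. Assume that for every q ∈ M with q² = −1 and every y ∈ M one has (q, q, y) = 0 and (y, q, q) = 0. Then every q ∈ M with q² = −1 lies in span_ℝ{i, j, k}. -/
theorem LinearIndependent.eq_zero_of_fin_four {R M : Type*} [Ring R] [AddCommGroup M]
    [Module R M] {v₀ v₁ v₂ v₃ : M} (hv : LinearIndependent R ![v₀, v₁, v₂, v₃])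
    {c₀ c₁ c₂ c₃ : R} (h : c₀ • v₀ + c₁ • v₁ + c₂ • v₂ + c₃ • v₃ = 0) :
    c₀ = 0 ∧ c₁ = 0 ∧ c₂ = 0 ∧ c₃ = 0 := by
  have hc := Fintype.linearIndependent_iff.mp hv ![c₀, c₁, c₂, c₃]
    (by simpa [Fin.sum_univ_four] using h)
  exact ⟨hc 0, hc 1, hc 2, hc 3⟩

theorem eq_zero_of_sq_coeffs {t x y z a b c d : ℝ}
    (h₀ : t * t - x * x + a * (y * y + z * z) + 1 = 0) (h₁ : 2 * t * x + b * (y * y + z * z) = 0)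
    (h₂ : 2 * t * y + c * (y * y + z * z) = 0) (h₃ : 2 * t * z + d * (y * y + z * z) = 0)
    (hc : (y * y + z * z) * c = 0) (hd : (y * y + z * z) * d = 0) : t = 0 := by
  by_cases hs : y * y + z * z = 0
  · have hy : y = 0 := by nlinarith
    have hz : z = 0 := by nlinarith
    subst hy hz
    rcases mul_eq_zero.mp (show t * x = 0 by linarith) with ht | hx
    · exact ht
    · subst hx; nlinarith
  · obtain rfl : c = 0 := (mul_eq_zero.mp hc).resolve_left hs
    obtain rfl : d = 0 := (mul_eq_zero.mp hd).resolve_left hs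
    have hty : t * y = 0 := by linarith
    have htz : t * z = 0 := by linarith
    by_contra ht
    apply hs
    rw [(mul_eq_zero.mp hty).resolve_left ht, (mul_eq_zero.mp htz).resolve_left ht]
    ring

structure IsTnTable {M : Type*} [NonAssocRing M] [Module ℝ M] (i j k : M)
    (a b c d f g h e : ℝ) : Prop where
  ii : i * i = -1
  ij : i * j = k
  ik : i * k = -j
  ji : j * i = -k
  ki : k * i = j
  jj : j * j = a • (1 : M) + b • i + c • j + d • k
  kk : k * k = a • (1 : M) + b • i + c • j + d • k
  jk : j * k = f • (1 : M) + g • i + h • j + e • k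
  kj : k * j = -(f • (1 : M) + g • i + h • j + e • k)

namespace IsTnTable

variable {M : Type*} [NonAssocRing M] [Module ℝ M] [SMulCommClass ℝ M M] [IsScalarTower ℝ M M]
  {i j k : M} {a b c d f g h e : ℝ} {t x y z : ℝ} {q : M}

theorem mul_self_eq (T : IsTnTable i j k a b c d f g h e)
    (hq : q = t • 1 + x • i + y • j + z • k) :
    q * q = (t * t - x * x + a * (y * y + z * z)) • (1 : M) +
      (2 * t * x + b * (y * y + z * z)) • i + (2 * t * y + c * (y * y + z * z)) • j +
      (2 * t * z + d * (y * y + z * z)) • k := by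
  subst hq
  simp only [mul_add, add_mul, smul_mul_assoc, mul_smul_comm, one_mul, mul_one,
    T.ii, T.ij, T.ik, T.ji, T.ki, T.jj, T.kk, T.jk, T.kj]
  module

theorem assocator_self_self_i_add_i_self_self (T : IsTnTable i j k a b c d f g h e)
    (hq : q = t • 1 + x • i + y • j + z • k) :
    assocator q q i + assocator i q q = (2 * (y * y + z * z)) • (d • j - c • k) := by
  subst hq
  simp only [assocator, mul_add, add_mul, smul_mul_assoc, mul_smul_comm, one_mul, mul_one,
    neg_mul, mul_neg, T.ii, T.ij, T.ik, T.ji, T.ki, T.jj, T.kk, T.jk, T.kj]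
  module

theorem coeffs_of_mul_self_eq_neg_one (T : IsTnTable i j k a b c d f g h e)
    (hli : LinearIndependent ℝ ![(1 : M), i, j, k])
    (hq : q = t • 1 + x • i + y • j + z • k) (hsq : q * q = -1) :
    t * t - x * x + a * (y * y + z * z) + 1 = 0 ∧ 2 * t * x + b * (y * y + z * z) = 0 ∧
      2 * t * y + c * (y * y + z * z) = 0 ∧ 2 * t * z + d * (y * y + z * z) = 0 := by
  have h := T.mul_self_eq hq
  rw [hsq] at h
  exact hli.eq_zero_of_fin_four (by linear_combination (norm := module) -h)

theorem coeffs_of_assocator_eq_zero (T : IsTnTable i j k a b c d f g h e)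
    (hli : LinearIndependent ℝ ![(1 : M), i, j, k])
    (hq : q = t • 1 + x • i + y • j + z • k) (hqqi : assocator q q i = 0)
    (hiqq : assocator i q q = 0) :
    (y * y + z * z) * c = 0 ∧ (y * y + z * z) * d = 0 := by
  have h := T.assocator_self_self_i_add_i_self_self hq
  rw [hqqi, hiqq, add_zero] at h
  obtain ⟨-, -, hd, hc⟩ := hli.eq_zero_of_fin_four (c₀ := 0) (c₁ := 0)
    (c₂ := 2 * ((y * y + z * z) * d)) (c₃ := -(2 * ((y * y + z * z) * c)))
    (by linear_combination (norm := module) -h)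
  constructor <;> linarith

end IsTnTable

/-- Lemma 1: in a real nonassociative unital algebra with basis `{1, i, j, k}` multiplying
according to table `(Tn)`, if all associators `(q,q,y)` and `(y,q,q)` vanish whenever
`q² = -1`, then every `q` with `q² = -1` lies in `span ℝ {i, j, k}`. -/
theorem imaginaryUnits_subset_span_ijk {M : Type*} [NonAssocRing M] [Module ℝ M]
    [SMulCommClass ℝ M M] [IsScalarTower ℝ M M]
    (a b c d f g h e : ℝ) (B : Module.Basis (Fin 4) ℝ M) (i j k : M)
    (hB0 : B 0 = 1) (hB1 : B 1 = i) (hB2 : B 2 = j) (hB3 : B 3 = k)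
    (hii : i * i = -1) (hij : i * j = k) (hik : i * k = -j)
    (hji : j * i = -k) (hki : k * i = j)
    (hjj : j * j = a • (1 : M) + b • i + c • j + d • k)
    (hkk : k * k = a • (1 : M) + b • i + c • j + d • k)
    (hjk : j * k = f • (1 : M) + g • i + h • j + e • k)
    (hkj : k * j = -(f • (1 : M) + g • i + h • j + e • k))
    (hPA : ∀ q : M, q * q = -1 → ∀ y : M, assocator q q y = 0 ∧ assocator y q q = 0) :
    ∀ q : M, q * q = -1 → q ∈ Submodule.span ℝ ({i, j, k} : Set M) := by
  have T : IsTnTable i j k a b c d f g h e := ⟨hii, hij, hik, hji, hki, hjj, hkk, hjk, hkj⟩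
  have hB : ⇑B = ![1, i, j, k] := by
    ext n; fin_cases n <;> simp [hB0, hB1, hB2, hB3]
  have hli : LinearIndependent ℝ ![(1 : M), i, j, k] := hB ▸ B.linearIndependent
  intro q hsq
  have hq : q = B.repr q 0 • 1 + B.repr q 1 • i + B.repr q 2 • j + B.repr q 3 • k := by
    simpa [Fin.sum_univ_four, hB] using (B.sum_repr q).symm
  obtain ⟨h₀, h₁, h₂, h₃⟩ := T.coeffs_of_mul_self_eq_neg_one hli hq hsq
  obtain ⟨hqqi, hiqq⟩ := hPA q hsq i
  obtain ⟨hc, hd⟩ := T.coeffs_of_assocator_eq_zero hli hq hqqi hiqq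
  have ht := eq_zero_of_sq_coeffs h₀ h₁ h₂ h₃ hc hd
  rw [ht, zero_smul, zero_add] at hq
  exact Submodule.mem_span_triple.mpr ⟨_, _, _, hq.symm⟩
end

section
/- Let M be a real nonassociative algebra with unit having a basis {1, i, j, k} whose multiplication is given by table (Tn) with parameters a, b, c, d, f, g, h, e ∈ ℝ. Then the following are equivalent: (1) M is associative; (2) for every q ∈ M with q² = −1 and every y ∈ M one has (q, q, y) = 0 and (y, q, q) = 0, and there exists q ∈ M with q² = −1 not lying in span_ℝ{1, i}; (3) there exists a basis {1, i', j', k'} of M with i'² = −1, i'j' = k', i'k' = −j', j'i' = −k', k'i' = j' realizing one of the following three tables: (M⁺) j'² = k'² = 1, j'k' = −i', k'j' = i'; (M⁰) j'² = k'² = 0, j'k' = k'j' = 0; (ℍ) j'² = k'² = −1, j'k' = i', k'j' = −i'. -/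
theorem Module.Basis.mul_assoc_of_apply {R M ι : Type*} [CommSemiring R]
    [NonUnitalNonAssocSemiring M] [Module R M] [SMulCommClass R M M] [IsScalarTower R M M]
    (B : Module.Basis ι R M) (H : ∀ p q r, B p * B q * B r = B p * (B q * B r)) (x y z : M) :
    x * y * z = x * (y * z) := by
  have hleft (p q : ι) :
      LinearMap.mulLeft R (B p * B q) = LinearMap.mulLeft R (B p) ∘ₗ LinearMap.mulLeft R (B q) :=
    B.ext fun r => H p q r
  have hbil : (LinearMap.mul R M).compr₂ (LinearMap.mulRight R z) =
      (LinearMap.mul R M).compl₂ (LinearMap.mulRight R z) :=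
    LinearMap.ext_basis B B fun p q => LinearMap.congr_fun (hleft p q) z
  exact LinearMap.congr_fun₂ hbil x y

theorem LinearIndependent.eq_zero_of_fin_four_s6 {R M : Type*} [Ring R] [AddCommGroup M]
    [Module R M] {x₀ x₁ x₂ x₃ : M} (hv : LinearIndependent R ![x₀, x₁, x₂, x₃]) {u₀ u₁ u₂ u₃ : R}
    (h : u₀ • x₀ + u₁ • x₁ + u₂ • x₂ + u₃ • x₃ = 0) :
    u₀ = 0 ∧ u₁ = 0 ∧ u₂ = 0 ∧ u₃ = 0 := by
  have := Fintype.linearIndependent_iff.mp hv ![u₀, u₁, u₂, u₃] (by simpa [Fin.sum_univ_four])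
  exact ⟨this 0, this 1, this 2, this 3⟩

section

variable {M : Type*} [NonAssocRing M] [Module ℝ M]

structure IsTnTable_s6 (a b c d f g h e : ℝ) (i j k : M) : Prop where
  ii : i * i = -1
  ij : i * j = k
  ik : i * k = -j
  ji : j * i = -k
  ki : k * i = j
  jj : j * j = a • (1 : M) + b • i + c • j + d • k
  kk : k * k = a • (1 : M) + b • i + c • j + d • k
  jk : j * k = f • (1 : M) + g • i + h • j + e • k
  kj : k * j = -(f • (1 : M) + g • i + h • j + e • k)

structure IsQuaternionTable (a : ℝ) (i j k : M) : Prop where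
  ii : i * i = -1
  ij : i * j = k
  ik : i * k = -j
  ji : j * i = -k
  ki : k * i = j
  jj : j * j = a • (1 : M)
  kk : k * k = a • (1 : M)
  jk : j * k = -(a • i)
  kj : k * j = a • i

theorem exists_isQuaternionTable_iff {i j k : M} :
    (∃ ε : ℝ, (ε = 1 ∨ ε = 0 ∨ ε = -1) ∧ IsQuaternionTable ε i j k) ↔
      i * i = -1 ∧ i * j = k ∧ i * k = -j ∧ j * i = -k ∧ k * i = j ∧
        ((j * j = 1 ∧ k * k = 1 ∧ j * k = -i ∧ k * j = i) ∨
         (j * j = 0 ∧ k * k = 0 ∧ j * k = 0 ∧ k * j = 0) ∨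
         (j * j = -1 ∧ k * k = -1 ∧ j * k = i ∧ k * j = -i)) := by
  constructor
  · rintro ⟨ε, hε, ⟨hii, hij, hik, hji, hki, hjj, hkk, hjk, hkj⟩⟩
    refine ⟨hii, hij, hik, hji, hki, ?_⟩
    rcases hε with rfl | rfl | rfl <;> simp_all
  · rintro ⟨hii, hij, hik, hji, hki,
      ⟨hjj, hkk, hjk, hkj⟩ | ⟨hjj, hkk, hjk, hkj⟩ | ⟨hjj, hkk, hjk, hkj⟩⟩
    · exact ⟨1, by norm_num, hii, hij, hik, hji, hki, by simpa, by simpa, by simpa, by simpa⟩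
    · exact ⟨0, by norm_num, hii, hij, hik, hji, hki, by simpa, by simpa, by simpa, by simpa⟩
    · exact ⟨-1, by norm_num, hii, hij, hik, hji, hki, by simpa, by simpa, by simpa, by simpa⟩

theorem IsTnTable_s6.isQuaternionTable {a b c d f g h e : ℝ} {i j k : M}
    (hT : IsTnTable_s6 a b c d f g h e i j k) (hb : b = 0) (hc : c = 0) (hd : d = 0) (hf : f = 0)
    (hg : g = -a) (hh : h = 0) (he : e = 0) : IsQuaternionTable a i j k := by
  subst hb hc hd hf hg hh he
  exact ⟨hT.ii, hT.ij, hT.ik, hT.ji, hT.ki, by simpa using hT.jj, by simpa using hT.kk,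
    by simpa using hT.jk, by simpa using hT.kj⟩

variable [SMulCommClass ℝ M M] [IsScalarTower ℝ M M]

theorem IsQuaternionTable.smul {a : ℝ} {i j k : M} (hQ : IsQuaternionTable a i j k) (t : ℝ) :
    IsQuaternionTable (t ^ 2 * a) i (t • j) (t • k) where
  ii := hQ.ii
  ij := by rw [mul_smul_comm, hQ.ij]
  ik := by rw [mul_smul_comm, hQ.ik, smul_neg]
  ji := by rw [smul_mul_assoc, hQ.ji, smul_neg]
  ki := by rw [smul_mul_assoc, hQ.ki]
  jj := by rw [smul_mul_smul_comm, hQ.jj, smul_smul, sq]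
  kk := by rw [smul_mul_smul_comm, hQ.kk, smul_smul, sq]
  jk := by rw [smul_mul_smul_comm, hQ.jk, smul_neg, smul_smul, sq]
  kj := by rw [smul_mul_smul_comm, hQ.kj, smul_smul, sq]

theorem IsQuaternionTable.mul_assoc {a : ℝ} {i j k : M} (hQ : IsQuaternionTable a i j k)
    {B : Module.Basis (Fin 4) ℝ M} (hB : ⇑B = ![1, i, j, k]) (x y z : M) :
    x * y * z = x * (y * z) := by
  refine B.mul_assoc_of_apply (fun p q r => ?_) x y z
  fin_cases p <;> fin_cases q <;> fin_cases r <;>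
    simp only [hB, Fin.isValue, Fin.reduceFinMk, Matrix.cons_val, hQ.ii, hQ.ij, hQ.ik, hQ.ji,
      hQ.ki, hQ.jj, hQ.kk, hQ.jk, hQ.kj, one_mul, mul_one, mul_neg, neg_mul, neg_neg,
      smul_mul_assoc, mul_smul_comm, smul_neg]

theorem IsQuaternionTable.exists_basis_normalized {a : ℝ} {i j k : M}
    (hQ : IsQuaternionTable a i j k) {B : Module.Basis (Fin 4) ℝ M} (hB : ⇑B = ![1, i, j, k]) :
    ∃ (B' : Module.Basis (Fin 4) ℝ M) (ε : ℝ) (j' k' : M), ⇑B' = ![1, i, j', k'] ∧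
      (ε = 1 ∨ ε = 0 ∨ ε = -1) ∧ IsQuaternionTable ε i j' k' := by
  rcases eq_or_ne a 0 with rfl | ha
  · exact ⟨B, 0, j, k, hB, by norm_num, hQ⟩
  set t := (√|a|)⁻¹
  have ht : t ≠ 0 := inv_ne_zero (Real.sqrt_ne_zero'.2 (abs_pos.2 ha))
  have ht2 : t ^ 2 = |a|⁻¹ := by rw [inv_pow, Real.sq_sqrt (abs_nonneg a)]
  let u := Units.mk0 t ht
  refine ⟨B.unitsSMul ![1, 1, u, u], t ^ 2 * a, t • j, t • k, ?_, ?_, hQ.smul t⟩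
  · ext n
    fin_cases n <;> simp [Module.Basis.unitsSMul_apply, hB, u, Units.smul_def]
  · rw [ht2]
    rcases abs_choice a with h | h <;> rw [h] <;> field_simp <;> simp

theorem IsQuaternionTable.exists_mul_self_eq_neg_one {ε : ℝ} {i j k : M}
    (hQ : IsQuaternionTable ε i j k) (hε : -1 ≤ ε) (hv : LinearIndependent ℝ ![1, i, j, k]) :
    ∃ q : M, q * q = -1 ∧ q ∉ Submodule.span ℝ ({1, i} : Set M) := by
  set β := √(1 + ε)
  have hβ : β * β = 1 + ε := Real.mul_self_sqrt (by linarith)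
  refine ⟨β • i + j, ?_, fun hq => ?_⟩
  · simp only [add_mul, mul_add, smul_mul_assoc, mul_smul_comm, hQ.ii, hQ.ij, hQ.ji, hQ.jj]
    linear_combination (norm := module) -(hβ • (1 : M))
  · obtain ⟨u, v, huv⟩ := Submodule.mem_span_pair.1 hq
    have := hv.eq_zero_of_fin_four_s6 (u₀ := -u) (u₁ := β - v) (u₂ := 1) (u₃ := 0)
      (by linear_combination (norm := module) -huv)
    exact one_ne_zero this.2.2.1

theorem IsTnTable_s6.isQuaternionTable_of_mul_assoc {a b c d f g h e : ℝ} {i j k : M}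
    (hT : IsTnTable_s6 a b c d f g h e i j k) (hv : LinearIndependent ℝ ![1, i, j, k])
    (hassoc : ∀ x y z : M, x * y * z = x * (y * z)) : IsQuaternionTable a i j k := by
  have hijk := hassoc i j k
  have hjki := hassoc j k i
  simp only [mul_add, add_mul, smul_mul_assoc, mul_smul_comm, one_mul, mul_one, smul_neg, hT.ii,
    hT.ij, hT.ik, hT.ji, hT.ki, hT.jj, hT.kk, hT.jk] at hijk hjki
  obtain ⟨-, -, hce, hdh⟩ := hv.eq_zero_of_fin_four_s6
    (u₀ := a + g) (u₁ := b - f) (u₂ := c + e) (u₃ := d - h)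
    (by linear_combination (norm := module) hijk)
  obtain ⟨hag, hbf, hce', hdh'⟩ := hv.eq_zero_of_fin_four_s6
    (u₀ := a + g) (u₁ := b - f) (u₂ := c - e) (u₃ := d + h)
    (by linear_combination (norm := module) -hjki)
  have hc : c = 0 := by linarith
  have hd : d = 0 := by linarith
  have he : e = 0 := by linarith
  have hh : h = 0 := by linarith
  have hf : f = b := by linarith
  have hg : g = -a := by linarith
  subst c d e h f g
  have hjjk := hassoc j j k
  simp only [add_mul, mul_add, smul_mul_assoc, mul_smul_comm, one_mul, mul_one, smul_neg, hT.ik,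
    hT.ji, hT.jj, hT.jk] at hjjk
  obtain ⟨-, -, hb, -⟩ := hv.eq_zero_of_fin_four_s6
    (u₀ := 0) (u₁ := 0) (u₂ := 2 * b) (u₃ := 0)
    (by linear_combination (norm := module) -hjjk)
  exact hT.isQuaternionTable (by linarith) rfl rfl (by linarith) rfl rfl rfl

theorem IsTnTable_s6.isQuaternionTable_of_imaginary_unit {a b c d f g h e : ℝ} {i j k : M}
    (hT : IsTnTable_s6 a b c d f g h e i j k) (hv : LinearIndependent ℝ ![1, i, j, k])
    {q : M} {α β γ δ : ℝ} (hq : q = α • (1 : M) + β • i + γ • j + δ • k)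
    (hs : γ ^ 2 + δ ^ 2 ≠ 0)
    (hsq : q * q = -1) (hleft : assocator q q i = 0) (hright : assocator i q q = 0) :
    IsQuaternionTable a i j k := by
  rw [assocator, hsq, neg_one_mul, sub_eq_zero] at hleft
  rw [assocator, hsq, mul_neg_one, sub_eq_zero] at hright
  subst hq
  simp only [mul_add, add_mul, smul_mul_assoc, mul_smul_comm, one_mul, mul_one, mul_neg, neg_mul,
    smul_add, smul_neg, smul_smul, hT.ii, hT.ij, hT.ik, hT.ji, hT.ki, hT.jj, hT.kk, hT.jk,
    hT.kj] at hsq hleft hright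
  set s := γ ^ 2 + δ ^ 2
  obtain ⟨hsq₀, hsq₁, hsq₂, hsq₃⟩ := hv.eq_zero_of_fin_four_s6
    (u₀ := α ^ 2 - β ^ 2 + s * a + 1) (u₁ := 2 * α * β + s * b) (u₂ := 2 * α * γ + s * c)
    (u₃ := 2 * α * δ + s * d)
    (by linear_combination (norm := module) hsq)
  obtain ⟨-, hl₁, hl₂, hl₃⟩ := hv.eq_zero_of_fin_four_s6
    (u₀ := -(2 * α * β + s * f)) (u₁ := α ^ 2 - β ^ 2 - s * g + 1) (u₂ := 2 * α * δ - s * h)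
    (u₃ := -(2 * α * γ + s * e))
    (by linear_combination (norm := module) -hleft)
  obtain ⟨hr₀, -, hr₂, hr₃⟩ := hv.eq_zero_of_fin_four_s6
    (u₀ := -(2 * α * β + s * f)) (u₁ := α ^ 2 - β ^ 2 - s * g + 1) (u₂ := -(2 * α * δ + s * h))
    (u₃ := 2 * α * γ - s * e)
    (by linear_combination (norm := module) hright)
  have hα : α = 0 := by
    have : α * s = 0 := by linear_combination (γ * (hr₃ - hl₃) + δ * (hl₂ - hr₂)) / 4
    exact (mul_eq_zero.1 this).resolve_right hs
  subst hα
  have cancel {x : ℝ} (hx : s * x = 0) : x = 0 := (mul_eq_zero.1 hx).resolve_left hs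
  exact hT.isQuaternionTable (cancel (by linarith)) (cancel (by linarith)) (cancel (by linarith))
    (cancel (by linarith)) (eq_neg_of_add_eq_zero_left (cancel (by linear_combination hsq₀ - hl₁)))
    (cancel (by linarith)) (cancel (by linarith))

theorem IsTnTable_s6.isQuaternionTable_of_partial_alternative {a b c d f g h e : ℝ} {i j k : M}
    (hT : IsTnTable_s6 a b c d f g h e i j k) {B : Module.Basis (Fin 4) ℝ M}
    (hB : ⇑B = ![1, i, j, k])
    (halt : ∀ q : M, q * q = -1 → ∀ y : M, assocator q q y = 0 ∧ assocator y q q = 0)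
    {q : M} (hq : q * q = -1) (hqi : q ∉ Submodule.span ℝ ({1, i} : Set M)) :
    IsQuaternionTable a i j k := by
  have hrepr : q = B.repr q 0 • (1 : M) + B.repr q 1 • i + B.repr q 2 • j + B.repr q 3 • k := by
    conv_lhs => rw [← B.sum_repr q]
    simp [Fin.sum_univ_four, hB]
  refine hT.isQuaternionTable_of_imaginary_unit (hB ▸ B.linearIndependent) hrepr (fun hs => hqi ?_)
    hq (halt q hq i).1 (halt q hq i).2
  have h₂ : B.repr q 2 = 0 := by nlinarith [sq_nonneg (B.repr q 2), sq_nonneg (B.repr q 3)]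
  have h₃ : B.repr q 3 = 0 := by nlinarith [sq_nonneg (B.repr q 2), sq_nonneg (B.repr q 3)]
  rw [hrepr, h₂, h₃, zero_smul, zero_smul, add_zero, add_zero]
  exact Submodule.mem_span_pair.2 ⟨_, _, rfl⟩

end

/-- For a real nonassociative unital algebra `M` with basis `{1, i, j, k}` multiplying by
table `(Tn)`, the following are equivalent: (1) `M` is associative; (2) `M` is partially
left and right alternative and has an imaginary unit outside `span ℝ {1, i}`; (3) there is
a basis `{1, i', j', k'}` of `M` realizing one of the tables of `M⁺`, `M⁰` or `ℍ`. -/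
theorem associative_tfae {M : Type*} [NonAssocRing M] [Module ℝ M]
    [SMulCommClass ℝ M M] [IsScalarTower ℝ M M]
    (a b c d f g h e : ℝ) (B : Module.Basis (Fin 4) ℝ M) (i j k : M)
    (hB0 : B 0 = 1) (hB1 : B 1 = i) (hB2 : B 2 = j) (hB3 : B 3 = k)
    (hii : i * i = -1) (hij : i * j = k) (hik : i * k = -j)
    (hji : j * i = -k) (hki : k * i = j)
    (hjj : j * j = a • (1 : M) + b • i + c • j + d • k)
    (hkk : k * k = a • (1 : M) + b • i + c • j + d • k)
    (hjk : j * k = f • (1 : M) + g • i + h • j + e • k)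
    (hkj : k * j = -(f • (1 : M) + g • i + h • j + e • k)) :
    ((∀ x y z : M, x * y * z = x * (y * z)) ↔
      ((∀ q : M, q * q = -1 → ∀ y : M, assocator q q y = 0 ∧ assocator y q q = 0) ∧
        ∃ q : M, q * q = -1 ∧ q ∉ Submodule.span ℝ ({1, i} : Set M))) ∧
    (((∀ q : M, q * q = -1 → ∀ y : M, assocator q q y = 0 ∧ assocator y q q = 0) ∧
        ∃ q : M, q * q = -1 ∧ q ∉ Submodule.span ℝ ({1, i} : Set M)) ↔
      (∃ (B' : Module.Basis (Fin 4) ℝ M) (i' j' k' : M),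
        B' 0 = 1 ∧ B' 1 = i' ∧ B' 2 = j' ∧ B' 3 = k' ∧
        i' * i' = -1 ∧ i' * j' = k' ∧ i' * k' = -j' ∧ j' * i' = -k' ∧ k' * i' = j' ∧
        ((j' * j' = 1 ∧ k' * k' = 1 ∧ j' * k' = -i' ∧ k' * j' = i') ∨
         (j' * j' = 0 ∧ k' * k' = 0 ∧ j' * k' = 0 ∧ k' * j' = 0) ∨
         (j' * j' = -1 ∧ k' * k' = -1 ∧ j' * k' = i' ∧ k' * j' = -i')))) := by
  have hB : ⇑B = ![1, i, j, k] := by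
    ext n
    fin_cases n <;> simp [hB0, hB1, hB2, hB3]
  have hT : IsTnTable_s6 a b c d f g h e i j k := ⟨hii, hij, hik, hji, hki, hjj, hkk, hjk, hkj⟩
  have assoc_iff : (∀ x y z : M, x * y * z = x * (y * z)) ↔ IsQuaternionTable a i j k :=
    ⟨hT.isQuaternionTable_of_mul_assoc (hB ▸ B.linearIndependent), fun hQ => hQ.mul_assoc hB⟩
  have alt_iff : ((∀ q : M, q * q = -1 → ∀ y : M, assocator q q y = 0 ∧ assocator y q q = 0) ∧
      ∃ q : M, q * q = -1 ∧ q ∉ Submodule.span ℝ ({1, i} : Set M)) ↔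
        IsQuaternionTable a i j k := by
    refine ⟨fun ⟨halt, q, hq, hqi⟩ => hT.isQuaternionTable_of_partial_alternative hB halt hq hqi,
      fun hQ => ⟨fun q _ y => by simp [assocator, hQ.mul_assoc hB], ?_⟩⟩
    obtain ⟨B', ε, j', k', hB', hε, hQ'⟩ := hQ.exists_basis_normalized hB
    exact hQ'.exists_mul_self_eq_neg_one (by rcases hε with rfl | rfl | rfl <;> norm_num)
      (hB' ▸ B'.linearIndependent)
  refine ⟨assoc_iff.trans alt_iff.symm, alt_iff.trans ⟨fun hQ => ?_, ?_⟩⟩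
  · obtain ⟨B', ε, j', k', hB', hε, hQ'⟩ := hQ.exists_basis_normalized hB
    exact ⟨B', i, j', k', congrFun hB' 0, congrFun hB' 1, congrFun hB' 2, congrFun hB' 3,
      exists_isQuaternionTable_iff.1 ⟨ε, hε, hQ'⟩⟩
  · rintro ⟨B', i', j', k', h0, h1, h2, h3, htable⟩
    obtain ⟨ε, -, hQ'⟩ := exists_isQuaternionTable_iff.2 htable
    refine assoc_iff.1 (hQ'.mul_assoc (B := B') ?_)
    ext n
    fin_cases n <;> simp [h0, h1, h2, h3]
end

section
/- Let A be a four-dimensional real nonassociative division algebra with unit 1 admitting a reflection φ. Then the eigenspaces E₁(φ) and E₋₁(φ) each have dimension 2 over ℝ, and E₁(φ) is isomorphic to the complex numbers as a real algebra; in particular there exists i ∈ E₁(φ) with i² = −1 such that E₁(φ) = span_ℝ{1, i}. -/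
open Module Submodule

private lemma aux_span_pair {A : Type*} [NonAssocRing A] [Module ℝ A]
    [FiniteDimensional ℝ A]
    (P : Submodule ℝ A) (hP : Module.finrank ℝ P = 2) (h1 : (1:A) ∈ P)
    (h10 : (1:A) ≠ 0) {x : A} (hx : x ∈ P)
    (hxs : x ∉ Submodule.span ℝ ({(1:A)} : Set A)) :
    Submodule.span ℝ ({1, x} : Set A) = P := by
  have hle : Submodule.span ℝ ({1, x} : Set A) ≤ P := by
    rw [Submodule.span_le]
    rintro y hy
    simp only [Set.mem_insert_iff, Set.mem_singleton_iff] at hy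
    rcases hy with rfl | rfl
    · exact h1
    · exact hx
  have hli : LinearIndependent ℝ ![(1:A), x] := by
    rw [LinearIndependent.pair_iff' h10]
    intro a ha
    exact hxs (Submodule.mem_span_singleton.2 ⟨a, ha⟩)
  have hrange : Set.range ![(1:A), x] = {1, x} := by
    simp [Matrix.range_cons, Matrix.range_empty, Set.pair_comm]
  apply Submodule.eq_of_le_of_finrank_le hle
  rw [hP, ← hrange, finrank_span_eq_card hli]
  simp

/-- Lemma 4: if `A` is a four-dimensional real nonassociative unital division algebra with
a reflection `φ`, then the eigenspaces `E₁(φ)` and `E₋₁(φ)` are both two-dimensional, and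
`E₁(φ) = span ℝ {1, i}` for some `i` with `i² = -1` (so `E₁(φ) ≅ ℂ` as a real algebra). -/
theorem eigenspaces_of_reflection {A : Type*} [NonAssocRing A] [Module ℝ A]
    [SMulCommClass ℝ A A] [IsScalarTower ℝ A A]
    (hdim : Module.finrank ℝ A = 4)
    (hdiv : ∀ a : A, a ≠ 0 →
      Function.Bijective (fun x : A => a * x) ∧ Function.Bijective (fun x : A => x * a))
    (φ : A ≃ₗ[ℝ] A) (hmul : ∀ x y : A, φ (x * y) = φ x * φ y)
    (hinvol : ∀ x : A, φ (φ x) = x) (hne : ∃ x : A, φ x ≠ x) :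
    Module.finrank ℝ (LinearMap.ker (φ.toLinearMap - (LinearMap.id : A →ₗ[ℝ] A))) = 2 ∧
    Module.finrank ℝ (LinearMap.ker (φ.toLinearMap + (LinearMap.id : A →ₗ[ℝ] A))) = 2 ∧
    ∃ i : A, φ i = i ∧ i * i = -1 ∧
      LinearMap.ker (φ.toLinearMap - (LinearMap.id : A →ₗ[ℝ] A)) =
        Submodule.span ℝ ({1, i} : Set A) := by
  have hA : FiniteDimensional ℝ A :=
    Module.finite_of_finrank_pos (by rw [hdim]; norm_num)
  have hnt : Nontrivial A := nontrivial_of_finrank_pos (R := ℝ) (by rw [hdim]; norm_num)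
  have h10 : (1:A) ≠ 0 := one_ne_zero
  set P : Submodule ℝ A := LinearMap.ker (φ.toLinearMap - (LinearMap.id : A →ₗ[ℝ] A)) with hPdef
  set M : Submodule ℝ A := LinearMap.ker (φ.toLinearMap + (LinearMap.id : A →ₗ[ℝ] A)) with hMdef
  have hmemP : ∀ x : A, x ∈ P ↔ φ x = x := by
    intro x
    simp [hPdef, LinearMap.mem_ker, LinearMap.sub_apply, sub_eq_zero]
  have hmemM : ∀ x : A, x ∈ M ↔ φ x = -x := by
    intro x
    simp [hMdef, LinearMap.mem_ker, LinearMap.add_apply, add_eq_zero_iff_eq_neg]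
  -- φ 1 = 1
  have hφ1ne : φ (1:A) ≠ 0 := fun h => h10 (φ.injective (by rw [h, map_zero]))
  have hφ1 : φ (1:A) = 1 := by
    have h := hmul 1 1
    rw [one_mul] at h
    exact ((hdiv (φ 1) hφ1ne).1.injective
      (show φ 1 * φ 1 = φ 1 * 1 by rw [mul_one, ← h])).symm ▸ rfl
  -- direct sum decomposition
  have hsup : P ⊔ M = ⊤ := by
    rw [eq_top_iff]
    intro x _
    have hx : x = ((1/2 : ℝ)) • (x + φ x) + ((1/2 : ℝ)) • (x - φ x) := by module
    rw [hx]
    refine Submodule.add_mem _ (Submodule.mem_sup_left (Submodule.smul_mem _ _ ?_))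
      (Submodule.mem_sup_right (Submodule.smul_mem _ _ ?_))
    · rw [hmemP, map_add, hinvol, add_comm]
    · rw [hmemM, map_sub, hinvol]
      abel
  have hinf : P ⊓ M = ⊥ := by
    rw [eq_bot_iff]
    rintro x ⟨hp, hm⟩
    have h1 := (hmemP x).1 hp
    have h2 := (hmemM x).1 hm
    have hxx : (2:ℝ) • x = 0 := by
      rw [h1] at h2
      rw [two_smul]
      exact add_eq_zero_iff_eq_neg.2 h2
    have : x = 0 := by
      rcases smul_eq_zero.mp hxx with h | h
      · norm_num at h
      · exact h
    simp [this]
  have hsum : finrank ℝ P + finrank ℝ M = 4 := by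
    have := Submodule.finrank_sup_add_finrank_inf_eq P M
    rw [hsup, hinf, finrank_bot, finrank_top, hdim] at this
    omega
  -- a nonzero element of M
  obtain ⟨x₀, hx₀⟩ := hne
  set v : A := x₀ - φ x₀ with hvdef
  have hv : v ≠ 0 := sub_ne_zero.2 (Ne.symm hx₀)
  have hvM : v ∈ M := by
    rw [hmemM, hvdef, map_sub, hinvol]
    abel
  -- left multiplication by v
  set f : A →ₗ[ℝ] A :=
    { toFun := fun x => v * x
      map_add' := mul_add v
      map_smul' := fun r x => mul_smul_comm r v x } with hfdef
  have hMP : ∀ x ∈ M, f x ∈ P := by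
    intro x hx
    rw [hmemP]
    show φ (v * x) = v * x
    rw [hmul, (hmemM v).1 hvM, (hmemM x).1 hx, neg_mul_neg]
  have hPM : ∀ x ∈ P, f x ∈ M := by
    intro x hx
    rw [hmemM]
    show φ (v * x) = -(v * x)
    rw [hmul, (hmemM v).1 hvM, (hmemP x).1 hx, neg_mul]
  have hfinj : Function.Injective f := (hdiv v hv).1.injective
  have hle1 : finrank ℝ M ≤ finrank ℝ P :=
    LinearMap.finrank_le_finrank_of_injective (f := f.restrict hMP)
      (fun a b hab => Subtype.ext (hfinj (congrArg Subtype.val hab)))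
  have hle2 : finrank ℝ P ≤ finrank ℝ M :=
    LinearMap.finrank_le_finrank_of_injective (f := f.restrict hPM)
      (fun a b hab => Subtype.ext (hfinj (congrArg Subtype.val hab)))
  have hP2 : finrank ℝ P = 2 := by omega
  have hM2 : finrank ℝ M = 2 := by omega
  refine ⟨hP2, hM2, ?_⟩
  -- find u ∈ P outside span {1}
  have h1P : (1:A) ∈ P := (hmemP 1).2 hφ1
  have hS1 : Submodule.span ℝ ({(1:A)} : Set A) < P := by
    refine lt_of_le_of_ne ((Submodule.span_le).2 (by simpa using h1P)) ?_
    intro h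
    rw [← h, finrank_span_singleton h10] at hP2
    omega
  obtain ⟨u, huP, huS⟩ := SetLike.exists_of_lt hS1
  have hPspan : Submodule.span ℝ ({1, u} : Set A) = P :=
    aux_span_pair P hP2 h1P h10 huP huS
  have huuP : u * u ∈ P := by
    rw [hmemP, hmul, (hmemP u).1 huP]
  obtain ⟨α, β, hαβ⟩ := Submodule.mem_span_pair.1 (hPspan ▸ huuP)
  -- complete the square
  have key : ∀ (s t : ℝ) (x y : A),
      (x - s • (1:A)) * (y - t • (1:A)) = x*y - t•x - s•y + (s*t) • (1:A) := by
    intro s t x y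
    simp only [sub_mul, mul_sub, smul_mul_assoc, mul_smul_comm, one_mul, mul_one, smul_smul]
    module
  set r : ℝ := β / 2 with hrdef
  set w : A := u - r • (1:A) with hwdef
  set c : ℝ := α + r * r with hcdef
  have hww : w * w = c • (1:A) := by
    rw [hwdef, key, ← hαβ, hcdef, hrdef]
    module
  rcases le_or_gt 0 c with hc | hc
  · -- impossible: zero divisors
    exfalso
    set s : ℝ := Real.sqrt c with hsdef
    have hs : s * s = c := Real.mul_self_sqrt hc
    have hab : (w - s • (1:A)) * (w + s • (1:A)) = 0 := by
      have h := key s (-s) w w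
      rw [neg_smul, sub_neg_eq_add] at h
      rw [h, hww, ← hs]
      module
    have ha : w - s • (1:A) ≠ 0 := by
      intro h
      rw [hwdef, sub_sub, sub_eq_zero, ← add_smul] at h
      exact huS (Submodule.mem_span_singleton.2 ⟨r + s, h.symm⟩)
    have hb : w + s • (1:A) ≠ 0 := by
      intro h
      rw [hwdef, sub_add, ← sub_smul, sub_eq_zero] at h
      exact huS (Submodule.mem_span_singleton.2 ⟨r - s, h.symm⟩)
    exact hb ((hdiv _ ha).1.injective
      (show (w - s•(1:A)) * (w + s•(1:A)) = (w - s•(1:A)) * 0 by rw [hab, mul_zero]))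
  · set t : ℝ := Real.sqrt (-c) with htdef
    have ht : t * t = -c := Real.mul_self_sqrt (by linarith)
    have ht0 : t ≠ 0 := ne_of_gt (Real.sqrt_pos.2 (by linarith))
    set i : A := t⁻¹ • w with hidef
    have hwP : w ∈ P := Submodule.sub_mem _ huP (Submodule.smul_mem _ _ h1P)
    have hiP : i ∈ P := Submodule.smul_mem _ _ hwP
    have hii : i * i = -1 := by
      have h1 : i * i = (t⁻¹ * t⁻¹ * c) • (1:A) := by
        rw [hidef, smul_mul_assoc, mul_smul_comm, hww, smul_smul, smul_smul]
      rw [h1, show t⁻¹ * t⁻¹ * c = -1 by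
        rw [show c = -(t*t) by linarith]
        field_simp]
      rw [neg_smul, one_smul]
    have hiS : i ∉ Submodule.span ℝ ({(1:A)} : Set A) := by
      intro h
      obtain ⟨k, hk⟩ := Submodule.mem_span_singleton.1 h
      apply huS
      have hwti : w = t • i := by
        rw [hidef, smul_smul, mul_inv_cancel₀ ht0, one_smul]
      have : u = (t * k + r) • (1:A) := by
        have hu : u = w + r • (1:A) := by rw [hwdef]; abel
        rw [hu, hwti, ← hk, smul_smul, add_smul]
      exact Submodule.mem_span_singleton.2 ⟨t * k + r, this.symm⟩
    exact ⟨i, (hmemP i).1 hiP, hii, (aux_span_pair P hP2 h1P h10 hiP hiS).symm⟩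
end

section
/- Let A be a four-dimensional partially alternative real nonassociative division algebra with unit admitting a reflection φ. Let i ∈ E₁(φ) satisfy i² = −1 with E₁(φ) = span_ℝ{1, i}, let w ∈ E₋₁(φ) be nonzero, and set v = wi. Then either iw = wi or iw = −wi. -/
/-- Lemma 5: for a four-dimensional partially alternative real division algebra `A` with a
reflection `φ`, `E₁(φ) = span ℝ {1, i}` with `i² = -1`, and `w ∈ E₋₁(φ)` nonzero with
`v = w i`, one has `iw = wi` or `iw = -wi`. -/
theorem iw_eq_wi_or_neg {A : Type*} [NonAssocRing A] [Module ℝ A]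
    [SMulCommClass ℝ A A] [IsScalarTower ℝ A A]
    (hdim : Module.finrank ℝ A = 4)
    (hdiv : ∀ a : A, a ≠ 0 →
      Function.Bijective (fun x : A => a * x) ∧ Function.Bijective (fun x : A => x * a))
    (hPA : IsPartiallyAlternative A)
    (φ : A ≃ₗ[ℝ] A) (hmul : ∀ x y : A, φ (x * y) = φ x * φ y)
    (hinvol : ∀ x : A, φ (φ x) = x) (hne : ∃ x : A, φ x ≠ x)
    (i : A) (hφi : φ i = i) (hi : i * i = -1)
    (hE1 : LinearMap.ker (φ.toLinearMap - (LinearMap.id : A →ₗ[ℝ] A)) =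
      Submodule.span ℝ ({1, i} : Set A))
    (w : A) (hw : φ w = -w) (hw0 : w ≠ 0) (v : A) (hv : v = w * i) :
    i * w = w * i ∨ i * w = -(w * i) := by
  -- 1 ≠ 0
  obtain ⟨x₀, hx₀⟩ := hne
  have h1ne : (1 : A) ≠ 0 := by
    intro h
    apply hx₀
    have hall : ∀ y : A, y = 0 := fun y => by
      calc y = 1 * y := (one_mul y).symm
        _ = 0 := by rw [h, zero_mul]
    rw [hall (φ x₀), hall x₀]
  -- r • 1 = 0 → r = 0
  have hsmul1 : ∀ r : ℝ, r • (1 : A) = 0 → r = 0 := by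
    intro r hr
    by_contra h
    exact h1ne (by rw [← inv_smul_smul₀ h (1 : A), hr, smul_zero])
  -- a•1 + b•i = 0 → a = 0 ∧ b = 0
  have h01 : ∀ a b : ℝ, a • (1 : A) + b • i = 0 → a = 0 ∧ b = 0 := by
    intro a b hab
    by_cases hb : b = 0
    · subst hb
      rw [zero_smul, add_zero] at hab
      exact ⟨hsmul1 a hab, rfl⟩
    · exfalso
      have hib : i = (-(a/b)) • (1 : A) := by
        have : b • i = -(a • (1:A)) := by linear_combination (norm := module) hab
        calc i = b⁻¹ • (b • i) := (inv_smul_smul₀ hb i).symm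
          _ = b⁻¹ • (-(a • (1:A))) := by rw [this]
          _ = (-(a/b)) • (1 : A) := by rw [smul_neg, smul_smul]; module
      have hii : ((-(a/b)) * (-(a/b))) • (1 : A) = -1 := by
        have := hi
        rw [hib, smul_mul_smul_comm, one_mul] at this
        exact this
      have : ((-(a/b)) * (-(a/b)) + 1) • (1 : A) = 0 := by
        have h1 : (-1 : A) = (-1 : ℝ) • (1 : A) := by module
        rw [h1] at hii
        linear_combination (norm := module) hii
      have := hsmul1 _ this
      nlinarith [sq_nonneg (a/b)]
  -- φ 1 = 1
  have hφ1 : φ (1 : A) = 1 := by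
    have key : ∀ y : A, y = φ 1 * y := fun y => by
      have h := hmul 1 (φ y)
      rw [one_mul, hinvol] at h
      exact h
    have := key 1
    rw [mul_one] at this
    exact this.symm
  -- injectivity of left mult by w
  have hwinj : Function.Injective (fun x : A => w * x) := ((hdiv w hw0).1).injective
  -- c•w + d•(w*i) = 0 → c = 0 ∧ d = 0
  have h23 : ∀ c d : ℝ, c • w + d • (w * i) = 0 → c = 0 ∧ d = 0 := by
    intro c d hcd
    have : w * (c • (1:A) + d • i) = w * 0 := by
      rw [mul_zero, mul_add, mul_smul_comm, mul_smul_comm, mul_one]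
      exact hcd
    have h0 := hwinj this
    exact h01 c d h0
  -- linear independence of ![1, i, w, w*i]
  have hL : LinearIndependent ℝ ![(1:A), i, w, w * i] := by
    rw [Fintype.linearIndependent_iff]
    intro g hg
    rw [Fin.sum_univ_four] at hg
    simp only [Matrix.cons_val_zero, Matrix.cons_val_one, Matrix.head_cons,
      Matrix.cons_val_two, Matrix.tail_cons, Matrix.cons_val_three] at hg
    -- apply φ
    have hgφ : g 0 • (1:A) + g 1 • i - g 2 • w - g 3 • (w * i) = 0 := by
      have := congrArg φ hg
      rw [map_add, map_add, map_add, map_smul, map_smul, map_smul, map_smul, map_zero,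
        hφ1, hφi, hmul, hw, hφi, neg_mul] at this
      linear_combination (norm := module) this
    have hsum : (2 * g 0) • (1:A) + (2 * g 1) • i = 0 := by
      linear_combination (norm := module) hg + hgφ
    obtain ⟨h2g0, h2g1⟩ := h01 _ _ hsum
    have hg0 : g 0 = 0 := by linarith
    have hg1 : g 1 = 0 := by linarith
    have hrest : g 2 • w + g 3 • (w * i) = 0 := by
      rw [hg0, hg1] at hg
      linear_combination (norm := module) hg
    obtain ⟨hg2, hg3⟩ := h23 _ _ hrest
    intro j
    fin_cases j <;> assumption
  -- span is everything
  have hspan : Submodule.span ℝ (Set.range ![(1:A), i, w, w * i]) = ⊤ := by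
    have hcard : Fintype.card (Fin 4) = Module.finrank ℝ A := by simp [hdim]
    have B := basisOfLinearIndependentOfCardEqFinrank hL hcard
    have hB := (basisOfLinearIndependentOfCardEqFinrank hL hcard).span_eq
    rwa [coe_basisOfLinearIndependentOfCardEqFinrank hL hcard] at hB
  -- express i * w
  have hmem : i * w ∈ Submodule.span ℝ (Set.range ![(1:A), i, w, w * i]) := by
    rw [hspan]; trivial
  rw [Submodule.mem_span_range_iff_exists_fun] at hmem
  obtain ⟨g, hg⟩ := hmem
  rw [Fin.sum_univ_four] at hg
  simp only [Matrix.cons_val_zero, Matrix.cons_val_one, Matrix.head_cons,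
    Matrix.cons_val_two, Matrix.tail_cons, Matrix.cons_val_three] at hg
  -- φ(i*w) = -(i*w), eliminate 1, i components
  have hφiw : φ (i * w) = -(i * w) := by rw [hmul, hφi, hw, mul_neg]
  have hgφ : g 0 • (1:A) + g 1 • i - g 2 • w - g 3 • (w * i) = -(i * w) := by
    have := congrArg φ hg
    rw [hφiw, map_add, map_add, map_add, map_smul, map_smul, map_smul, map_smul,
      hφ1, hφi, hmul w i, hw, hφi, neg_mul] at this
    linear_combination (norm := module) this
  have h2ab : (2 * g 0) • (1:A) + (2 * g 1) • i = 0 := by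
    linear_combination (norm := module) hg + hgφ
  obtain ⟨h2g0, h2g1⟩ := h01 _ _ h2ab
  have hg0 : g 0 = 0 := by linarith
  have hg1 : g 1 = 0 := by linarith
  have hiw : i * w = g 2 • w + g 3 • (w * i) := by
    rw [hg0, hg1] at hg
    linear_combination (norm := module) hg.symm
  -- associator identities for imaginary unit i
  obtain ⟨ha1, ha2, ha3⟩ := hPA.2 i hi w
  have hA1 : i * (i * w) = -w := by
    have h : i * i * w - i * (i * w) = 0 := ha1
    rw [hi, neg_one_mul] at h
    exact (sub_eq_zero.mp h).symm
  have hA2 : i * (w * i) = i * w * i := (sub_eq_zero.mp (ha2 : i * w * i - i * (w * i) = 0)).symm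
  have hA3 : w * i * i = -w := by
    have h : w * i * i - w * (i * i) = 0 := ha3
    rw [hi, mul_neg_one] at h
    exact sub_eq_zero.mp h
  -- compute i * (i * w)
  have e1 : i * (i * w) = g 2 • (i * w) + g 3 • (i * (w * i)) := by
    conv_lhs => rw [hiw]
    rw [mul_add, mul_smul_comm, mul_smul_comm]
  have e2 : i * (w * i) = g 2 • (w * i) + g 3 • (-w) := by
    rw [hA2]
    conv_lhs => rw [hiw]
    rw [add_mul, smul_mul_assoc, smul_mul_assoc, hA3]
  have e3 : -w = g 2 • (i * w) + g 3 • (g 2 • (w * i) + g 3 • (-w)) := by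
    conv_lhs => rw [← hA1]
    rw [e1, e2]
  rw [hiw] at e3
  have hkey : (g 2 * g 2 - g 3 * g 3 + 1) • w + (g 2 * g 3 + g 3 * g 2) • (w * i) = 0 := by
    linear_combination (norm := module) -e3
  obtain ⟨k1, k2⟩ := h23 _ _ hkey
  have hcd : g 2 * g 3 = 0 := by linarith
  rcases mul_eq_zero.mp hcd with hc0 | hd0
  · rw [hc0] at k1
    have : (g 3 - 1) * (g 3 + 1) = 0 := by linear_combination -k1
    rcases mul_eq_zero.mp this with h | h
    · left
      have hd1 : g 3 = 1 := by linarith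
      rw [hiw, hc0, hd1, zero_smul, one_smul, zero_add]
    · right
      have hd1 : g 3 = -1 := by linarith
      rw [hiw, hc0, hd1, zero_smul, zero_add, neg_smul, one_smul]
  · exfalso
    rw [hd0] at k1
    nlinarith [sq_nonneg (g 2), k1]
end

section
/- Let A be a four-dimensional real nonassociative division algebra with unit 1 admitting a reflection. Then the commutative nucleus of A equals ℝ·1, i.e., NC(A) = {r·1 : r ∈ ℝ}. -/
open Module Submodule

set_option linter.unusedSectionVars false
set_option maxHeartbeats 1000000

section Helpers

variable {A : Type*} [NonAssocRing A] [Module ℝ A]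
    [SMulCommClass ℝ A A] [IsScalarTower ℝ A A]

theorem mul_smul_smul' (a b : ℝ) (p q : A) : (a • p) * (b • q) = (a * b) • (p * q) := by
  rw [smul_mul_assoc, mul_smul_comm, smul_smul]

theorem expand4 (a b c d : ℝ) (p q r s : A) :
    (a • p + b • q) * (c • r + d • s)
      = (a * c) • (p * r) + (a * d) • (p * s) + (b * c) • (q * r) + (b * d) • (q * s) := by
  rw [add_mul, mul_add, mul_add, mul_smul_smul', mul_smul_smul', mul_smul_smul',
    mul_smul_smul']
  abel


theorem aux_span' [FiniteDimensional ℝ A] (hone : (1 : A) ≠ 0)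
    (B : Submodule ℝ A) (hrk : finrank ℝ B = 2) (h1 : (1 : A) ∈ B)
    {v : A} (hv : v ∈ B) (hvs : v ∉ (ℝ ∙ (1 : A))) :
    ∀ w ∈ B, ∃ a b : ℝ, a • (1 : A) + b • v = w := by
  have li : LinearIndependent ℝ ![(1 : A), v] := by
    rw [LinearIndependent.pair_iff]
    intro s t hst
    by_cases ht : t = 0
    · subst ht
      rw [zero_smul, add_zero] at hst
      rcases smul_eq_zero.1 hst with h | h
      · exact ⟨h, rfl⟩
      · exact absurd h hone
    · exfalso
      apply hvs
      rw [Submodule.mem_span_singleton]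
      refine ⟨-s / t, ?_⟩
      have : t • v = (-s) • (1 : A) := by
        have := hst
        rw [neg_smul]
        linear_combination (norm := module) hst
      have h2 : v = t⁻¹ • ((-s) • (1 : A)) := by
        rw [← this, smul_smul, inv_mul_cancel₀ ht, one_smul]
      rw [h2, smul_smul, div_eq_inv_mul]
  have hrange : Set.range ![(1 : A), v] = {1, v} := by
    ext y
    simp [Matrix.range_cons, Matrix.range_empty, or_comm]
  have hsp : span ℝ ({(1 : A), v} : Set A) = B := by
    apply Submodule.eq_of_le_of_finrank_le
    · rw [Submodule.span_le]
      rintro y (rfl | rfl) <;> simp_all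
    · rw [hrk, ← hrange, finrank_span_eq_card li]
      simp
  intro w hw
  have : w ∈ span ℝ ({(1 : A), v} : Set A) := hsp ▸ hw
  exact Submodule.mem_span_pair.1 this

theorem aux_Z' (hnz : ∀ a b : A, a * b = 0 → a = 0 ∨ b = 0)
    (P M : Submodule ℝ A) (hdisj : ∀ x : A, x ∈ P → x ∈ M → x = 0)
    {s c : A} (hs : s ∈ P) (hc : c ∈ M) (hc0 : c ≠ 0)
    (hss : s * s = c * c) (hcomm : s * c = c * s) : False := by
  have hcc : c * c ≠ 0 := by
    intro h
    rcases hnz c c h with h' | h' <;> exact hc0 h'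
  have hprod : (s + c) * (s - c) = 0 := by
    have : (s + c) * (s - c) = s * s - s * c + (c * s - c * c) := by
      rw [add_mul, mul_sub, mul_sub]
    rw [this, hss, hcomm]; abel
  rcases hnz _ _ hprod with h | h
  · have : c = 0 := hdisj c (by
      have : c = -s := eq_neg_of_add_eq_zero_right h
      rw [this]; exact neg_mem hs) hc
    exact hc0 this
  · have : c = 0 := hdisj c (by
      have : c = s := (sub_eq_zero.1 h).symm
      rw [this]; exact hs) hc
    exact hc0 this

theorem aux_sqrt' [FiniteDimensional ℝ A]
    (hnz : ∀ a b : A, a * b = 0 → a = 0 ∨ b = 0) (hone : (1 : A) ≠ 0)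
    (B : Submodule ℝ A) (h1 : (1 : A) ∈ B)
    (hcl : ∀ x ∈ B, ∀ y ∈ B, x * y ∈ B) (hrk : finrank ℝ B = 2) :
    ∀ w ∈ B, ∃ s ∈ B, s * s = w := by
  have hex : ∃ u ∈ B, u ∉ (ℝ ∙ (1 : A)) := by
    by_contra h
    push_neg at h
    have hle : B ≤ (ℝ ∙ (1 : A)) := h
    have := Submodule.finrank_mono (R := ℝ) hle
    rw [hrk, finrank_span_singleton hone] at this
    omega
  obtain ⟨u, hu, hus⟩ := hex
  obtain ⟨α, β, hαβ⟩ := aux_span' hone B hrk h1 hu hus (u * u) (hcl u hu u hu)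
  set z : A := u - (β / 2) • 1 with hzdef
  have hzB : z ∈ B := sub_mem hu (smul_mem B _ h1)
  have hzs : z ∉ (ℝ ∙ (1 : A)) := by
    intro hmem
    apply hus
    rcases Submodule.mem_span_singleton.1 hmem with ⟨a, ha⟩
    rw [Submodule.mem_span_singleton]
    exact ⟨a + β / 2, by rw [add_smul, ha, hzdef]; abel⟩
  set t : ℝ := α + (β / 2) * (β / 2) with htdef
  have hzz : z * z = t • (1 : A) := by
    have hz' : z = (1 : ℝ) • u + (-(β / 2)) • (1 : A) := by
      rw [hzdef]; module
    rw [hz', expand4, one_mul u, mul_one u, one_mul (1 : A), ← hαβ]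
    match_scalars <;> ring
  have ht : t < 0 := by
    by_contra hge
    push_neg at hge
    set r : ℝ := Real.sqrt t with hrdef
    have hr2 : r * r = t := Real.mul_self_sqrt hge
    have hfac : (z - r • 1) * (z + r • 1) = 0 := by
      have h1' : z - r • 1 = (1 : ℝ) • z + (-r) • (1 : A) := by module
      have h2' : z + r • 1 = (1 : ℝ) • z + r • (1 : A) := by module
      rw [h1', h2', expand4, mul_one z, one_mul z, one_mul (1 : A)]
      have : (1 * 1 : ℝ) • (z * z) = t • (1 : A) := by rw [hzz]; module
      rw [this]
      have heq : t • (1 : A) + (1 * r) • z + (-r * 1) • z + (-r * r) • (1 : A)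
          = (t - r * r) • (1 : A) := by match_scalars <;> ring
      rw [heq, hr2, sub_self, zero_smul]
    rcases hnz _ _ hfac with h | h
    · exact hzs (Submodule.mem_span_singleton.2 ⟨r, by
        have := sub_eq_zero.1 h; rw [this]⟩)
    · exact hzs (Submodule.mem_span_singleton.2 ⟨-r, by
        have : z = -(r • 1) := eq_neg_of_add_eq_zero_left h
        rw [neg_smul, this]⟩)
  set q : ℝ := Real.sqrt (-t) with hqdef
  have hqpos : 0 < q := Real.sqrt_pos.2 (by linarith)
  have hq2 : q * q = -t := Real.mul_self_sqrt (by linarith)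
  set i : A := q⁻¹ • z with hidef
  have hiB : i ∈ B := smul_mem B _ hzB
  have hii : i * i = -(1 : A) := by
    rw [hidef, mul_smul_smul', hzz, smul_smul]
    have : q⁻¹ * q⁻¹ * t = -1 := by
      have hq0 : q ≠ 0 := ne_of_gt hqpos
      field_simp
      nlinarith [hq2]
    rw [this, neg_smul, one_smul]
  have his : i ∉ (ℝ ∙ (1 : A)) := by
    intro hmem
    apply hzs
    rcases Submodule.mem_span_singleton.1 hmem with ⟨a, ha⟩
    rw [Submodule.mem_span_singleton]
    refine ⟨q * a, ?_⟩
    have hz : z = q • i := by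
      rw [hidef, smul_smul, mul_inv_cancel₀ (ne_of_gt hqpos), one_smul]
    rw [hz, ← ha, smul_smul]
  intro w hw
  obtain ⟨a, b, hab⟩ := aux_span' hone B hrk h1 hiB his w hw
  obtain ⟨ζ, hζ⟩ := IsAlgClosed.exists_pow_nat_eq (k := ℂ) (Complex.mk a b) (n := 2) (by norm_num)
  have hre : ζ.re * ζ.re - ζ.im * ζ.im = a := by
    have := congrArg Complex.re hζ
    simpa [pow_two, Complex.mul_re] using this
  have him : ζ.re * ζ.im + ζ.im * ζ.re = b := by
    have := congrArg Complex.im hζ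
    simpa [pow_two, Complex.mul_im] using this
  refine ⟨ζ.re • (1 : A) + ζ.im • i, add_mem (smul_mem B _ h1) (smul_mem B _ hiB), ?_⟩
  rw [expand4, one_mul (1 : A), mul_one i, one_mul i, hii, ← hab, ← hre, ← him]
  match_scalars <;> ring

end Helpers

/-- Proposition 2: a four-dimensional real nonassociative unital division algebra admitting
a reflection has commutative nucleus `NC(A) = ℝ·1`. -/
theorem commutativeNucleus_eq_span_one {A : Type*} [NonAssocRing A] [Module ℝ A]
    [SMulCommClass ℝ A A] [IsScalarTower ℝ A A]
    (hdim : Module.finrank ℝ A = 4)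
    (hdiv : ∀ a : A, a ≠ 0 →
      Function.Bijective (fun x : A => a * x) ∧ Function.Bijective (fun x : A => x * a))
    (hrefl : ∃ φ : A ≃ₗ[ℝ] A, (∀ x y : A, φ (x * y) = φ x * φ y) ∧
      (∀ x : A, φ (φ x) = x) ∧ ∃ x : A, φ x ≠ x) :
    {x : A | ∀ y : A, x * y = y * x} = {x : A | ∃ r : ℝ, x = r • (1 : A)} := by
  obtain ⟨φ, hmul, hinv, x₀, hx₀⟩ := hrefl
  haveI hfd : FiniteDimensional ℝ A := FiniteDimensional.of_finrank_eq_succ (n := 3) hdim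
  haveI : Nontrivial A := Module.nontrivial_of_finrank_pos (R := ℝ) (by omega)
  have hone : (1 : A) ≠ 0 := one_ne_zero
  -- no zero divisors
  have hnz : ∀ a b : A, a * b = 0 → a = 0 ∨ b = 0 := by
    intro a b hab
    by_cases ha : a = 0
    · exact Or.inl ha
    · refine Or.inr ((hdiv a ha).1.injective ?_)
      show a * b = a * 0
      rw [mul_zero, hab]
  -- φ 1 = 1
  have hφ1 : φ 1 = 1 := by
    have h := hmul 1 1
    rw [mul_one] at h
    have h2 : φ 1 * (φ 1 - 1) = 0 := by rw [mul_sub, mul_one, ← h, sub_self]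
    rcases hnz _ _ h2 with h3 | h3
    · exfalso
      have : (1 : A) = 0 := by rw [← hinv 1, h3, map_zero]
      exact hone this
    · exact sub_eq_zero.1 h3
  -- eigenspaces
  set P : Submodule ℝ A :=
    { carrier := {y | φ y = y}
      add_mem' := fun {a b} ha hb => by
        simp only [Set.mem_setOf_eq, map_add] at *
        rw [ha, hb]
      zero_mem' := by simp
      smul_mem' := fun r x hx => by
        simp only [Set.mem_setOf_eq, map_smul] at *
        rw [hx] } with hPdef
  set M : Submodule ℝ A :=
    { carrier := {y | φ y = -y}
      add_mem' := fun {a b} ha hb => by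
        simp only [Set.mem_setOf_eq, map_add] at *
        rw [ha, hb]
        abel
      zero_mem' := by simp
      smul_mem' := fun r x hx => by
        simp only [Set.mem_setOf_eq, map_smul] at *
        rw [hx, smul_neg] } with hMdef
  have hPm : ∀ y : A, y ∈ P ↔ φ y = y := fun y => Iff.rfl
  have hMm : ∀ y : A, y ∈ M ↔ φ y = -y := fun y => Iff.rfl
  have h1P : (1 : A) ∈ P := hφ1
  -- gradings
  have hPP : ∀ x ∈ P, ∀ y ∈ P, x * y ∈ P := fun x hx y hy => by
    rw [hPm] at *
    rw [hmul, hx, hy]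
  have hMM : ∀ x ∈ M, ∀ y ∈ M, x * y ∈ P := fun x hx y hy => by
    rw [hMm] at hx hy
    rw [hPm, hmul, hx, hy, neg_mul_neg]
  have hPM : ∀ x ∈ P, ∀ y ∈ M, x * y ∈ M := fun x hx y hy => by
    rw [hPm] at hx; rw [hMm] at *
    rw [hmul, hx, hy, mul_neg]
  have hMP : ∀ x ∈ M, ∀ y ∈ P, x * y ∈ M := fun x hx y hy => by
    rw [hPm] at hy; rw [hMm] at *
    rw [hmul, hx, hy, neg_mul]
  -- disjointness
  have hdisj : ∀ x : A, x ∈ P → x ∈ M → x = 0 := by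
    intro x hxP hxM
    rw [hPm] at hxP; rw [hMm] at hxM
    rw [hxP] at hxM
    have h2 : (2 : ℝ) • x = 0 := by
      linear_combination (norm := module) hxM
    rcases smul_eq_zero.1 h2 with h | h
    · norm_num at h
    · exact h
  -- decomposition
  have hdecP : ∀ x : A, (2⁻¹ : ℝ) • (x + φ x) ∈ P := by
    intro x
    rw [hPm, map_smul, map_add, hinv, add_comm]
  have hdecM : ∀ x : A, (2⁻¹ : ℝ) • (x - φ x) ∈ M := by
    intro x
    rw [hMm, map_smul, map_sub, hinv, ← smul_neg, neg_sub]
  have hdecomp : ∀ x : A, x = (2⁻¹ : ℝ) • (x + φ x) + (2⁻¹ : ℝ) • (x - φ x) := by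
    intro x; module
  -- dimensions
  have hsup : P ⊔ M = ⊤ := by
    rw [eq_top_iff]
    intro x _
    exact Submodule.mem_sup.2 ⟨_, hdecP x, _, hdecM x, (hdecomp x).symm⟩
  have hinf : P ⊓ M = ⊥ := by
    rw [eq_bot_iff]
    intro x hx
    exact (Submodule.mem_bot ℝ).2 (hdisj x hx.1 hx.2)
  have hsum : finrank ℝ P + finrank ℝ M = 4 := by
    have h := Submodule.finrank_sup_add_finrank_inf_eq P M
    rw [hsup, hinf, finrank_top, hdim, finrank_bot] at h
    omega
  -- nonzero element of M
  obtain ⟨v₀, hv₀M, hv₀⟩ : ∃ v ∈ M, v ≠ 0 := by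
    refine ⟨(2⁻¹ : ℝ) • (x₀ - φ x₀), hdecM x₀, ?_⟩
    intro h
    rcases smul_eq_zero.1 h with h' | h'
    · norm_num at h'
    · exact hx₀ (sub_eq_zero.1 h').symm
  have hPleM : finrank ℝ P ≤ finrank ℝ M := by
    have hf : ∀ x ∈ P, (LinearMap.mulLeft ℝ v₀) x ∈ M := fun x hx => hMP v₀ hv₀M x hx
    have hinj : Function.Injective ((LinearMap.mulLeft ℝ v₀).restrict hf) := by
      intro a b hab
      have := congrArg Subtype.val hab
      simp only [LinearMap.restrict_apply, LinearMap.mulLeft_apply] at this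
      exact Subtype.ext ((hdiv v₀ hv₀).1.injective this)
    exact LinearMap.finrank_le_finrank_of_injective hinj
  have hMleP : finrank ℝ M ≤ finrank ℝ P := by
    have hf : ∀ x ∈ M, (LinearMap.mulLeft ℝ v₀) x ∈ P := fun x hx => hMM v₀ hv₀M x hx
    have hinj : Function.Injective ((LinearMap.mulLeft ℝ v₀).restrict hf) := by
      intro a b hab
      have := congrArg Subtype.val hab
      simp only [LinearMap.restrict_apply, LinearMap.mulLeft_apply] at this
      exact Subtype.ext ((hdiv v₀ hv₀).1.injective this)
    exact LinearMap.finrank_le_finrank_of_injective hinj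
  have hPrk : finrank ℝ P = 2 := by omega
  -- main
  ext x
  simp only [Set.mem_setOf_eq]
  constructor
  · intro hx
    -- φ x commutes with everything
    have hφN : ∀ y : A, φ x * y = y * φ x := by
      intro y
      calc φ x * y = φ x * φ (φ y) := by rw [hinv]
        _ = φ (x * φ y) := (hmul x (φ y)).symm
        _ = φ (φ y * x) := by rw [hx (φ y)]
        _ = φ (φ y) * φ x := hmul (φ y) x
        _ = y * φ x := by rw [hinv]
    -- the M-component of x is zero
    set c : A := (2⁻¹ : ℝ) • (x - φ x) with hcdef
    have hcM : c ∈ M := hdecM x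
    have hcN : ∀ y : A, c * y = y * c := by
      intro y
      rw [hcdef, smul_mul_assoc, mul_smul_comm, sub_mul, mul_sub, hx y, hφN y]
    have hc0 : c = 0 := by
      by_contra hc
      obtain ⟨s, hsP, hss⟩ := aux_sqrt' hnz hone P h1P hPP hPrk (c * c) (hMM c hcM c hcM)
      exact aux_Z' hnz P M hdisj hsP hcM hc hss (hcN s).symm
    have hxP : x ∈ P := by
      rw [hPm]
      have : x - φ x = 0 := by
        rcases smul_eq_zero.1 (hcdef ▸ hc0 : (2⁻¹ : ℝ) • (x - φ x) = 0) with h | h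
        · norm_num at h
        · exact h
      have := sub_eq_zero.1 this
      exact this.symm
    -- x must be in ℝ∙1
    by_contra hnot
    push_neg at hnot
    have hxs : x ∉ (ℝ ∙ (1 : A)) := by
      intro hmem
      rcases Submodule.mem_span_singleton.1 hmem with ⟨r, hr⟩
      exact hnot r hr.symm
    obtain ⟨s, hsP, hss⟩ := aux_sqrt' hnz hone P h1P hPP hPrk (v₀ * v₀) (hMM v₀ hv₀M v₀ hv₀M)
    obtain ⟨a, b, hab⟩ := aux_span' hone P hPrk h1P hxP hxs s hsP
    have hcomm : s * v₀ = v₀ * s := by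
      rw [← hab, add_mul, mul_add, smul_mul_assoc, smul_mul_assoc, mul_smul_comm,
        mul_smul_comm, one_mul, mul_one, hx v₀]
    exact aux_Z' hnz P M hdisj hsP hv₀M hv₀ hss hcomm
  · rintro ⟨r, rfl⟩ y
    rw [smul_mul_assoc, one_mul, mul_smul_comm, mul_one]
end

section
/- Let A be a four-dimensional partially alternative real nonassociative division algebra with unit admitting a reflection φ, and suppose E₁(φ) = span_ℝ{1, i} with i² = −1. Then iy = −yi for every y ∈ E₋₁(φ). -/
private lemma complex_sqrt (a b : ℝ) : ∃ c d : ℝ, c * c - d * d = a ∧ 2 * (c * d) = b := by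
  obtain ⟨z, hz⟩ := IsAlgClosed.exists_pow_nat_eq (⟨a, b⟩ : ℂ) zero_lt_two
  refine ⟨z.re, z.im, ?_, ?_⟩
  · have := congrArg Complex.re hz
    simpa [pow_two, Complex.mul_re] using this
  · have := congrArg Complex.im hz
    simp [pow_two, Complex.mul_im] at this
    linarith

private lemma eq_neg_self_imp_zero {A : Type*} [AddCommGroup A] [Module ℝ A]
    (w : A) (h : w = -w) : w = 0 := by
  have h2 : (2 : ℝ) • w = 0 := by
    rw [two_smul]; nth_rewrite 1 [h]; exact neg_add_cancel w
  have := congrArg (fun t => (2⁻¹ : ℝ) • t) h2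
  simpa [smul_smul] using this

/-- Corollary 1: for a four-dimensional partially alternative real division algebra `A`
with a reflection `φ` and `E₁(φ) = span ℝ {1, i}`, `i² = -1`, one has `iy = -yi` for all
`y ∈ E₋₁(φ)`. -/
theorem i_anticommutes_on_Eneg {A : Type*} [NonAssocRing A] [Module ℝ A]
    [SMulCommClass ℝ A A] [IsScalarTower ℝ A A]
    (hdim : Module.finrank ℝ A = 4)
    (hdiv : ∀ a : A, a ≠ 0 →
      Function.Bijective (fun x : A => a * x) ∧ Function.Bijective (fun x : A => x * a))
    (hPA : IsPartiallyAlternative A)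
    (φ : A ≃ₗ[ℝ] A) (hmul : ∀ x y : A, φ (x * y) = φ x * φ y)
    (hinvol : ∀ x : A, φ (φ x) = x) (hne : ∃ x : A, φ x ≠ x)
    (i : A) (hφi : φ i = i) (hi : i * i = -1)
    (hE1 : LinearMap.ker (φ.toLinearMap - (LinearMap.id : A →ₗ[ℝ] A)) =
      Submodule.span ℝ ({1, i} : Set A)) :
    ∀ y : A, φ y = -y → i * y = -(y * i) := by
  intro y hy
  obtain ⟨h1, h2, h3⟩ := hPA.2 i hi y
  unfold assocator at h1 h2 h3
  rw [sub_eq_zero] at h1 h2 h3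
  -- h1 : i * i * y = i * (i * y), etc.
  have e1 : i * (i * y) = -y := by rw [← h1, hi, neg_one_mul]
  have e2 : i * y * i = i * (y * i) := h2
  have e3 : y * i * i = -y := by rw [h3, hi, mul_neg_one]
  set w := i * y + y * i with hw_def
  suffices hw0 : w = 0 by
    have := eq_neg_of_add_eq_zero_left hw0
    exact this
  have hiw : i * w = w * i := by
    rw [hw_def, mul_add, add_mul, e1, e3, ← e2]
    abel
  -- nontriviality and φ 1 = 1
  have h10 : (1 : A) ≠ 0 := by
    intro h
    obtain ⟨x, hx⟩ := hne
    have hx0 : x = 0 := by rw [← mul_one x, h, mul_zero]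
    exact hx (by rw [hx0, map_zero])
  have hφ1 : φ (1 : A) = 1 := by
    have hene : φ (1 : A) ≠ 0 := fun h => h10 (by rw [← hinvol 1, h, map_zero])
    have he : φ (1 : A) * φ 1 = φ 1 * 1 := by rw [← hmul, one_mul, mul_one]
    exact (hdiv _ hene).1.injective he
  have hφw : φ w = -w := by
    rw [hw_def, map_add, hmul, hmul, hφi, hy]
    simp [mul_neg, neg_mul]
    abel
  have hw2 : φ (w * w) = w * w := by rw [hmul, hφw, neg_mul_neg]
  have hmem : w * w ∈ Submodule.span ℝ ({1, i} : Set A) := by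
    rw [← hE1]
    simp [LinearMap.mem_ker, LinearMap.sub_apply, hw2]
  obtain ⟨a, b, hab⟩ := Submodule.mem_span_pair.mp hmem
  obtain ⟨c, d, hc, hd⟩ := complex_sqrt a b
  set z := c • (1 : A) + d • i with hz_def
  have hφz : φ z = z := by rw [hz_def, map_add, map_smul, map_smul, hφ1, hφi]
  have hzz : z * z = w * w := by
    have : z * z = (c * c - d * d) • (1 : A) + (2 * (c * d)) • i := by
      rw [hz_def]
      simp only [mul_add, add_mul, smul_mul_assoc, mul_smul_comm, smul_smul,
        one_mul, mul_one, hi]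
      module
    rw [this, hc, hd, hab]
  have hzw : z * w = w * z := by
    rw [hz_def]
    simp only [add_mul, mul_add, smul_mul_assoc, mul_smul_comm, one_mul, mul_one, hiw]
  have key : (z + w) * (z - w) = 0 := by
    have expand : (z + w) * (z - w) = z * z + w * z - (z * w + w * w) := by
      rw [mul_sub (z + w) z w, add_mul z w z, add_mul z w w]
    rw [expand, hzz, hzw]
    abel
  by_contra hwne
  have hzwne : z + w ≠ 0 := by
    intro h
    have hwz : w = -z := eq_neg_of_add_eq_zero_right h
    have hfix : φ w = w := by rw [hwz, map_neg, hφz]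
    exact hwne (eq_neg_self_imp_zero w (hfix.symm.trans hφw))
  have hsub : z - w = 0 := by
    have := (hdiv _ hzwne).1.injective (a₁ := z - w) (a₂ := 0)
    simp only [mul_zero] at this
    exact this key
  have hwz : w = z := (sub_eq_zero.mp hsub).symm
  have hfix : φ w = w := by rw [hwz, hφz]
  exact hwne (eq_neg_self_imp_zero w (hfix.symm.trans hφw))
end

section
/- Let A be a four-dimensional partially alternative real nonassociative division algebra with unit 1 admitting a reflection. Then there exists a basis {1, i, w, v} of A such that i² = −1, iw = −v, iv = w, wi = v, vi = −w, and each of the products w², wv, vw, v² lies in span_ℝ{1, i}. -/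
/-!
The reflection `φ` splits `A = P ⊕ M` into its `±1`-eigenspaces, and multiplication is graded:
`PP, MM ⊆ P` and `PM, MP ⊆ M`. Left multiplication by a nonzero `m ∈ M` embeds `P` into `M`
and `M` into `P`, so both are planes, and `P` is a two-dimensional division subalgebra, i.e.
`P = span {1, i}` with `i² = -1`. No nonzero `x ∈ M` commutes with `i`: otherwise a square root
`z ∈ P ≅ ℂ` of `x² ∈ P` commutes with `x`, and `(x - z)(x + z) = 0` forces `x = ±z ∈ P`.
Hence `w = im - mi ≠ 0`; partial alternativity gives `iw = -wi`, and with `v = wi` the whole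
table follows, `{w, v}` spanning `M` because right multiplication by `i` squares to `-1`.
-/

open Module Module.End

section LinearAlgebra

variable {K V : Type*} [Field K] [AddCommGroup V] [Module K V]

theorem disjoint_eigenspace_one_neg_one [NeZero (2 : K)] (φ : End K V) :
    Disjoint (eigenspace φ 1) (eigenspace φ (-1)) :=
  (eigenspaces_iSupIndep φ).pairwiseDisjoint
    (show (1 : K) ≠ -1 from fun h => (two_ne_zero : (2 : K) ≠ 0) (by linear_combination h))

theorem isCompl_eigenspace_one_neg_one [NeZero (2 : K)] {φ : End K V}
    (hφ : ∀ x, φ (φ x) = x) : IsCompl (eigenspace φ 1) (eigenspace φ (-1)) := by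
  refine ⟨disjoint_eigenspace_one_neg_one φ, ?_⟩
  rw [codisjoint_iff, eq_top_iff]
  intro x _
  refine Submodule.mem_sup.2 ⟨(2⁻¹ : K) • (x + φ x), ?_, (2⁻¹ : K) • (x - φ x), ?_, ?_⟩
  · rw [mem_eigenspace_iff, map_smul, map_add, hφ, add_comm, one_smul]
  · rw [mem_eigenspace_iff, map_smul, map_sub, hφ, neg_one_smul, ← smul_neg, neg_sub]
  · rw [← smul_add, add_add_sub_cancel, ← two_smul K, smul_smul, inv_mul_cancel₀ two_ne_zero,
      one_smul]

theorem Submodule.span_pair_eq_of_finrank_eq_two {S : Submodule K V} {x y : V}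
    (hli : LinearIndependent K ![x, y]) (hx : x ∈ S) (hy : y ∈ S) (hS : finrank K S = 2) :
    Submodule.span K {x, y} = S := by
  have : FiniteDimensional K S := .of_finrank_pos (by omega)
  refine Submodule.eq_of_le_of_finrank_eq ?_ ?_
  · simpa [Submodule.span_le, Set.insert_subset_iff] using ⟨hx, hy⟩
  · rw [hS, ← Matrix.range_cons_cons_empty x y ![], finrank_span_eq_card hli, Fintype.card_fin]

theorem finrank_le_of_injective_of_mapsTo [FiniteDimensional K V] {S T : Submodule K V}
    {f : V →ₗ[K] V} (hf : Function.Injective f) (hST : ∀ x ∈ S, f x ∈ T) :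
    finrank K S ≤ finrank K T :=
  LinearMap.finrank_le_finrank_of_injective (f := f.restrict hST)
    fun _ _ hxy => Subtype.ext (hf (congrArg Subtype.val hxy))

theorem exists_basis_of_span_pair_eq {P M : Submodule K V} (hPM : IsCompl P M)
    (hV : finrank K V = 4) {a b c d : V} (hP : Submodule.span K {a, b} = P)
    (hM : Submodule.span K {c, d} = M) : ∃ B : Basis (Fin 4) K V, ⇑B = ![a, b, c, d] := by
  have hspan : ⊤ ≤ Submodule.span K (Set.range ![a, b, c, d]) := by
    rw [Matrix.range_cons, Matrix.range_cons, Matrix.range_cons_cons_empty, ← Set.union_assoc,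
      Set.singleton_union, Submodule.span_union, hP, hM, hPM.sup_eq_top]
  exact ⟨basisOfTopLeSpanOfCardEqFinrank _ hspan (by simp [hV]),
    coe_basisOfTopLeSpanOfCardEqFinrank _ _ _⟩

end LinearAlgebra

namespace IsPartiallyAlternative

variable {A : Type*} [NonAssocRing A] {i : A}

theorem imgUnit_mul_imgUnit_mul (hA : IsPartiallyAlternative A) (hi : IsImgUnit i)
    (y : A) : i * (i * y) = -y := by
  have h := (hA.2 i hi y).1
  rw [assocator, sub_eq_zero, hi, neg_one_mul] at h
  exact h.symm

theorem mul_imgUnit_mul_imgUnit (hA : IsPartiallyAlternative A) (hi : IsImgUnit i)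
    (y : A) : y * i * i = -y := by
  have h := (hA.2 i hi y).2.2
  rwa [assocator, sub_eq_zero, hi, mul_neg_one] at h

theorem imgUnit_mul_mul_imgUnit (hA : IsPartiallyAlternative A) (hi : IsImgUnit i)
    (y : A) :
    i * y * i = i * (y * i) :=
  sub_eq_zero.1 (hA.2 i hi y).2.1

theorem imgUnit_mul_commutator (hA : IsPartiallyAlternative A) (hi : IsImgUnit i)
    (x : A) :
    i * (i * x - x * i) = -((i * x - x * i) * i) := by
  rw [mul_sub, sub_mul, hA.imgUnit_mul_imgUnit_mul hi, hA.mul_imgUnit_mul_imgUnit hi,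
    hA.imgUnit_mul_mul_imgUnit hi]
  abel

theorem imgUnit_mul_mul_imgUnit_of_anticomm (hA : IsPartiallyAlternative A) (hi : IsImgUnit i)
    {w : A} (hw : i * w = -(w * i)) : i * (w * i) = w := by
  rw [← hA.imgUnit_mul_mul_imgUnit hi, hw, neg_mul, hA.mul_imgUnit_mul_imgUnit hi, neg_neg]

end IsPartiallyAlternative

theorem linearIndependent_pair_of_apply_apply_eq_neg {V : Type*} [AddCommGroup V] [Module ℝ V]
    {f : V →ₗ[ℝ] V} {x : V} (hx : x ≠ 0) (hf : f (f x) = -x) :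
    LinearIndependent ℝ ![x, f x] := by
  refine (LinearIndependent.pair_iff' hx).2 fun a ha => hx ?_
  have h : (a * a + 1) • x = 0 := by
    rw [add_smul, one_smul, mul_smul, ha, ← map_smul, ha, hf, neg_add_cancel]
  exact (smul_eq_zero.1 h).resolve_left
    (add_pos_of_nonneg_of_pos (mul_self_nonneg a) one_pos).ne'

theorem linearIndependent_one_imgUnit {A : Type*} [NonAssocRing A] [Nontrivial A] [Module ℝ A]
    [IsScalarTower ℝ A A] {i : A} (hi : IsImgUnit i) :
    LinearIndependent ℝ ![1, i] := by
  simpa using linearIndependent_pair_of_apply_apply_eq_neg (f := LinearMap.mulRight ℝ i)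
    one_ne_zero (by simp [show i * i = -1 from hi])

section Algebra

variable {A : Type*} [NonAssocRing A] [Module ℝ A] [SMulCommClass ℝ A A] [IsScalarTower ℝ A A]

theorem mul_mem_eigenspace_mul {φ : End ℝ A} (hφ : ∀ x y, φ (x * y) = φ x * φ y) {a b c : ℝ}
    {x y : A} (hx : x ∈ eigenspace φ a) (hy : y ∈ eigenspace φ b) (hc : a * b = c) :
    x * y ∈ eigenspace φ c := by
  rw [mem_eigenspace_iff] at *
  rw [hφ, hx, hy, smul_mul_smul_comm, hc]

theorem exists_smul_mul_self_eq_neg_one [NoZeroDivisors A] {u : A} (hu : u ∉ ℝ ∙ (1 : A))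
    {δ : ℝ} (hδ : u * u = δ • 1) : ∃ c : ℝ, c • u * c • u = -1 := by
  by_cases hδ0 : 0 ≤ δ
  · exfalso
    have hsq : u * u = √δ • (1 : A) * √δ • 1 := by
      rw [hδ, smul_mul_smul_comm, one_mul, Real.mul_self_sqrt hδ0]
    have hmem : √δ • (1 : A) ∈ ℝ ∙ (1 : A) := Submodule.mem_span_singleton.2 ⟨_, rfl⟩
    rcases ((Commute.one_right u).smul_right √δ).mul_self_eq_mul_self_iff.1 hsq with h | h
    · exact hu (h ▸ hmem)
    · exact hu (h ▸ Submodule.neg_mem _ hmem)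
  · have hr : √(-δ) * √(-δ) = -δ := Real.mul_self_sqrt (by linarith)
    have hr0 : √(-δ) ≠ 0 := (Real.sqrt_pos.2 (by linarith)).ne'
    refine ⟨(√(-δ))⁻¹, ?_⟩
    rw [smul_mul_smul_comm, hδ, smul_smul]
    have : (√(-δ))⁻¹ * (√(-δ))⁻¹ * δ = -1 := by
      field_simp
      linarith
    rw [this, neg_one_smul]

theorem exists_mem_mul_self_eq_neg_one_of_finrank_eq_two [NoZeroDivisors A]
    [FiniteDimensional ℝ A] {S : Submodule ℝ A} (h1 : (1 : A) ∈ S)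
    (hmul : ∀ x ∈ S, ∀ y ∈ S, x * y ∈ S) (hS : finrank ℝ S = 2) : ∃ i ∈ S, i * i = -1 := by
  obtain ⟨u, huS, hu⟩ : ∃ u ∈ S, u ∉ ℝ ∙ (1 : A) := by
    by_contra! h
    have := (Submodule.finrank_mono (s := S) h).trans (finrank_span_le_card {(1 : A)})
    simp [hS] at this
  have h10 : (1 : A) ≠ 0 := fun h => hu (by rw [← mul_one u, h, mul_zero]; exact zero_mem _)
  have hspan : Submodule.span ℝ {1, u} = S := by
    refine Submodule.span_pair_eq_of_finrank_eq_two ?_ h1 huS hS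
    exact (LinearIndependent.pair_iff' h10).2
      fun a ha => hu (ha ▸ Submodule.mem_span_singleton.2 ⟨a, rfl⟩)
  obtain ⟨α, β, hαβ⟩ := Submodule.mem_span_pair.1 (hspan ▸ hmul u huS u huS)
  -- completing the square
  set u' := u - (β / 2) • (1 : A)
  have hu' : u' ∉ ℝ ∙ (1 : A) := by
    intro h
    obtain ⟨c, hc⟩ := Submodule.mem_span_singleton.1 h
    exact hu (Submodule.mem_span_singleton.2 ⟨c + β / 2, by rw [add_smul, hc, sub_add_cancel]⟩)
  have hsq : u' * u' = (α + β ^ 2 / 4) • 1 := by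
    simp only [u', sub_mul, mul_sub, smul_mul_assoc, mul_smul_comm, one_mul, mul_one, ← hαβ]
    module
  obtain ⟨c, hc⟩ := exists_smul_mul_self_eq_neg_one hu' hsq
  exact ⟨c • u', S.smul_mem c (S.sub_mem huS (S.smul_mem _ h1)), hc⟩

theorem exists_mul_self_eq_of_isImgUnit {i : A} (hi : IsImgUnit i) (a b : ℝ) :
    ∃ x y : ℝ, (x • 1 + y • i) * (x • 1 + y • i) = a • (1 : A) + b • i := by
  obtain ⟨c, hc⟩ := IsAlgClosed.exists_eq_mul_self ((a : ℂ) + b * Complex.I)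
  have hre : a = c.re * c.re - c.im * c.im := by simpa using congrArg Complex.re hc
  have him : b = c.re * c.im + c.im * c.re := by simpa using congrArg Complex.im hc
  refine ⟨c.re, c.im, ?_⟩
  simp only [add_mul, mul_add, smul_mul_smul_comm, one_mul, mul_one, show i * i = -1 from hi,
    hre, him]
  module

theorem finrank_eigenspace_one_eq_finrank_eigenspace_neg_one [NoZeroDivisors A]
    [FiniteDimensional ℝ A] {φ : End ℝ A} (hφ : ∀ x y, φ (x * y) = φ x * φ y) {m : A}
    (hm : m ∈ eigenspace φ (-1)) (hm0 : m ≠ 0) :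
    finrank ℝ (eigenspace φ 1) = finrank ℝ (eigenspace φ (-1)) := by
  have hle {a b : ℝ} (hab : -1 * a = b) :
      finrank ℝ (eigenspace φ a) ≤ finrank ℝ (eigenspace φ b) :=
    finrank_le_of_injective_of_mapsTo (f := LinearMap.mulLeft ℝ m) (mul_right_injective₀ hm0)
      fun _ hx => mul_mem_eigenspace_mul hφ hm hx hab
  exact le_antisymm (hle (by norm_num)) (hle (by norm_num))

theorem not_commute_of_mem_eigenspace_neg_one [NoZeroDivisors A] {φ : End ℝ A}
    (hφ : ∀ x y, φ (x * y) = φ x * φ y) {i x : A} (hi : IsImgUnit i)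
    (hP : Submodule.span ℝ {1, i} = eigenspace φ 1) (hx : x ∈ eigenspace φ (-1)) (hx0 : x ≠ 0) :
    ¬ Commute i x := by
  intro hix
  have hxx : x * x ∈ Submodule.span ℝ {1, i} :=
    hP ▸ mul_mem_eigenspace_mul hφ hx hx (by norm_num)
  obtain ⟨a, b, hab⟩ := Submodule.mem_span_pair.1 hxx
  obtain ⟨s, t, hst⟩ := exists_mul_self_eq_of_isImgUnit hi a b
  have hz : s • 1 + t • i ∈ eigenspace φ 1 :=
    hP ▸ Submodule.mem_span_pair.2 ⟨s, t, rfl⟩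
  have hxz : Commute x (s • 1 + t • i) :=
    ((Commute.one_right x).smul_right s).add_right (hix.symm.smul_right t)
  have hxP : x ∈ eigenspace φ 1 := by
    rcases hxz.mul_self_eq_mul_self_iff.1 (hst.trans hab).symm with h | h
    · exact h ▸ hz
    · exact h ▸ Submodule.neg_mem _ hz
  exact hx0 (Submodule.disjoint_def.1 (disjoint_eigenspace_one_neg_one φ) x hxP hx)

end Algebra

/-- Corollary 2: a four-dimensional partially alternative real unital division algebra
admitting a reflection has a basis `{1, i, w, v}` realizing the multiplication table
`(Tp)`. -/
theorem exists_basis_Tp {A : Type*} [NonAssocRing A] [Module ℝ A]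
    [SMulCommClass ℝ A A] [IsScalarTower ℝ A A]
    (hdim : Module.finrank ℝ A = 4)
    (hdiv : ∀ a : A, a ≠ 0 →
      Function.Bijective (fun x : A => a * x) ∧ Function.Bijective (fun x : A => x * a))
    (hPA : IsPartiallyAlternative A)
    (hrefl : ∃ φ : A ≃ₗ[ℝ] A, (∀ x y : A, φ (x * y) = φ x * φ y) ∧
      (∀ x : A, φ (φ x) = x) ∧ ∃ x : A, φ x ≠ x) :
    ∃ (B : Module.Basis (Fin 4) ℝ A) (i w v : A),
      B 0 = 1 ∧ B 1 = i ∧ B 2 = w ∧ B 3 = v ∧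
      i * i = -1 ∧ i * w = -v ∧ i * v = w ∧ w * i = v ∧ v * i = -w ∧
      w * w ∈ Submodule.span ℝ ({1, i} : Set A) ∧
      w * v ∈ Submodule.span ℝ ({1, i} : Set A) ∧
      v * w ∈ Submodule.span ℝ ({1, i} : Set A) ∧
      v * v ∈ Submodule.span ℝ ({1, i} : Set A) := by
  obtain ⟨φ, hmul, hinv, x₀, hx₀⟩ := hrefl
  have : FiniteDimensional ℝ A := .of_finrank_pos (by omega)
  have : Nontrivial A := Module.nontrivial_of_finrank_pos (R := ℝ) (by omega)
  have : IsLeftCancelMulZero A := ⟨fun ha => (hdiv _ ha).1.injective⟩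
  set P := eigenspace (φ : End ℝ A) 1
  set M := eigenspace (φ : End ℝ A) (-1)
  have hcompl : IsCompl P M := isCompl_eigenspace_one_neg_one hinv
  obtain ⟨m, hmM, hm0⟩ : ∃ m ∈ M, m ≠ 0 :=
    ⟨x₀ - φ x₀, by simp [M, hinv], sub_ne_zero.2 hx₀.symm⟩
  have hrank : finrank ℝ P = finrank ℝ M :=
    finrank_eigenspace_one_eq_finrank_eigenspace_neg_one hmul hmM hm0
  have hP2 : finrank ℝ P = 2 := by have := Submodule.finrank_add_eq_of_isCompl hcompl; omega
  have h1P : (1 : A) ∈ P :=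
    mem_eigenspace_iff.2 ((map_one (MulEquiv.mk φ.toEquiv hmul)).trans (one_smul ℝ 1).symm)
  obtain ⟨i, hiP, hi⟩ := exists_mem_mul_self_eq_neg_one_of_finrank_eq_two h1P
    (fun _ hx _ hy => mul_mem_eigenspace_mul hmul hx hy (one_mul 1)) hP2
  have hspanP : Submodule.span ℝ {1, i} = P :=
    Submodule.span_pair_eq_of_finrank_eq_two (linearIndependent_one_imgUnit hi) h1P hiP hP2
  set w := i * m - m * i
  have hw0 : w ≠ 0 :=
    sub_ne_zero.2 (not_commute_of_mem_eigenspace_neg_one hmul hi hspanP hmM hm0)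
  have hwM : w ∈ M := M.sub_mem (mul_mem_eigenspace_mul hmul hiP hmM (one_mul _))
    (mul_mem_eigenspace_mul hmul hmM hiP (mul_one _))
  have hvM : w * i ∈ M := mul_mem_eigenspace_mul hmul hwM hiP (mul_one _)
  have hiw : i * w = -(w * i) := hPA.imgUnit_mul_commutator hi m
  have hvi : w * i * i = -w := hPA.mul_imgUnit_mul_imgUnit hi w
  have hspanM : Submodule.span ℝ {w, w * i} = M :=
    Submodule.span_pair_eq_of_finrank_eq_two
      (linearIndependent_pair_of_apply_apply_eq_neg (f := LinearMap.mulRight ℝ i) hw0 hvi)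
      hwM hvM (by omega)
  obtain ⟨B, hB⟩ := exists_basis_of_span_pair_eq hcompl hdim hspanP hspanM
  have hMM {x y : A} (hx : x ∈ M) (hy : y ∈ M) : x * y ∈ Submodule.span ℝ {1, i} :=
    hspanP ▸ mul_mem_eigenspace_mul hmul hx hy (by norm_num)
  exact ⟨B, i, w, w * i, by simp [hB], by simp [hB], by simp [hB], by simp [hB], hi, hiw,
    hPA.imgUnit_mul_mul_imgUnit_of_anticomm hi hiw, rfl, hvi, hMM hwM hwM, hMM hwM hvM,
    hMM hvM hwM, hMM hvM hvM⟩
end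

section
/- Let A be a four-dimensional partially alternative real nonassociative division algebra with unit admitting a reflection. Then the commutator bracket [x, y] = xy − yx satisfies the Jacobi identity on A: [x,[y,z]] + [y,[z,x]] + [z,[x,y]] = 0 for all x, y, z ∈ A; hence (A, [·,·]) is a real Lie algebra. -/
set_option linter.unusedSectionVars false
set_option maxHeartbeats 1000000

/-- The commutator bracket `[x, y] = xy - yx`. -/
def commBracket {A : Type*} [NonAssocRing A] (x y : A) : A := x * y - y * x

/-- The fully alternating sum of associators. -/
def Fsum {A : Type*} [NonAssocRing A] (x y z : A) : A :=
  assocator x y z + assocator y z x + assocator z x y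
    - assocator x z y - assocator z y x - assocator y x z

section FsumLemmas
variable {A : Type*} [NonAssocRing A] [Module ℝ A] [SMulCommClass ℝ A A] [IsScalarTower ℝ A A]

lemma jacobi_eq (x y z : A) :
    ((x * (y*z - z*y) - (y*z - z*y) * x) + (y * (z*x - x*z) - (z*x - x*z) * y) +
      (z * (x*y - y*x) - (x*y - y*x) * z)) = -Fsum x y z := by
  simp only [Fsum, assocator, mul_sub, sub_mul]
  abel

lemma Fsum_swap12 (x y z : A) : Fsum y x z = -Fsum x y z := by unfold Fsum; abel
lemma Fsum_swap23 (x y z : A) : Fsum x z y = -Fsum x y z := by unfold Fsum; abel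

lemma eq_zero_of_eq_neg {a : A} (h : a = -a) : a = 0 := by
  have h2 : (2:ℝ) • a = 0 := by rw [two_smul]; nth_rewrite 2 [h]; exact add_neg_cancel a
  simpa using (smul_eq_zero.mp h2).resolve_left (by norm_num)

@[simp] lemma Fsum_xxz (x z : A) : Fsum x x z = 0 :=
  eq_zero_of_eq_neg (by rw [← Fsum_swap12 x x z])
@[simp] lemma Fsum_xyy (x y : A) : Fsum x y y = 0 :=
  eq_zero_of_eq_neg (by rw [← Fsum_swap23 x y y])
@[simp] lemma Fsum_xyx (x y : A) : Fsum x y x = 0 := by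
  rw [Fsum_swap23, Fsum_xxz, neg_zero]

@[simp] lemma Fsum_one1 (y z : A) : Fsum 1 y z = 0 := by simp [Fsum, assocator]
@[simp] lemma Fsum_one2 (x z : A) : Fsum x 1 z = 0 := by simp [Fsum, assocator]
@[simp] lemma Fsum_one3 (x y : A) : Fsum x y 1 = 0 := by simp [Fsum, assocator]

lemma Fsum_add1 (x x' y z : A) : Fsum (x + x') y z = Fsum x y z + Fsum x' y z := by
  simp only [Fsum, assocator, add_mul, mul_add]; abel
lemma Fsum_add2 (x y y' z : A) : Fsum x (y + y') z = Fsum x y z + Fsum x y' z := by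
  simp only [Fsum, assocator, add_mul, mul_add]; abel
lemma Fsum_add3 (x y z z' : A) : Fsum x y (z + z') = Fsum x y z + Fsum x y z' := by
  simp only [Fsum, assocator, add_mul, mul_add]; abel
lemma Fsum_smul1 (c : ℝ) (x y z : A) : Fsum (c • x) y z = c • Fsum x y z := by
  simp only [Fsum, assocator, smul_mul_assoc, mul_smul_comm, smul_sub, smul_add]
lemma Fsum_smul2 (c : ℝ) (x y z : A) : Fsum x (c • y) z = c • Fsum x y z := by
  simp only [Fsum, assocator, smul_mul_assoc, mul_smul_comm, smul_sub, smul_add]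
lemma Fsum_smul3 (c : ℝ) (x y z : A) : Fsum x y (c • z) = c • Fsum x y z := by
  simp only [Fsum, assocator, smul_mul_assoc, mul_smul_comm, smul_sub, smul_add]

lemma Fsum_core (i u j : A) (β : ℝ)
    (hiu : i*u = j) (hij : i*j = -u)
    (hui : u*i = β•j) (hji : j*i = -(β•u))
    (hq : i*(u*j) = (u*j)*i) (hr : i*(j*u) = (j*u)*i) :
    Fsum i u j = 0 := by
  unfold Fsum assocator
  rw [hiu, hij, hui, hji, hq, hr]
  simp only [neg_mul, mul_neg, smul_mul_assoc, mul_smul_comm, neg_neg]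
  module

end FsumLemmas

/-- In a four-dimensional partially alternative real unital division algebra admitting a
reflection, the commutator bracket satisfies the Jacobi identity, so `(A, [·,·])` is a
real Lie algebra. -/
theorem jacobi_of_partiallyAlternative {A : Type*} [NonAssocRing A] [Module ℝ A]
    [SMulCommClass ℝ A A] [IsScalarTower ℝ A A]
    (hdim : Module.finrank ℝ A = 4)
    (hdiv : ∀ a : A, a ≠ 0 →
      Function.Bijective (fun x : A => a * x) ∧ Function.Bijective (fun x : A => x * a))
    (hPA : IsPartiallyAlternative A)
    (hrefl : ∃ φ : A ≃ₗ[ℝ] A, (∀ x y : A, φ (x * y) = φ x * φ y) ∧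
      (∀ x : A, φ (φ x) = x) ∧ ∃ x : A, φ x ≠ x) :
    ∀ x y z : A,
      commBracket x (commBracket y z) + commBracket y (commBracket z x) +
        commBracket z (commBracket x y) = 0 := by
  suffices hF : ∀ p q r : A, Fsum p q r = 0 by
    intro x y z
    simp only [commBracket]
    rw [jacobi_eq, hF, neg_zero]
  haveI : FiniteDimensional ℝ A := .of_finrank_pos (by rw [hdim]; norm_num)
  have h10 : (1:A) ≠ 0 := by
    intro h
    have hall : ∀ w : A, w = 0 := fun w => by rw [← mul_one w, h, mul_zero]
    have : Subsingleton A := ⟨fun a b => by rw [hall a, hall b]⟩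
    rw [Module.finrank_zero_of_subsingleton] at hdim
    exact absurd hdim (by norm_num)
  obtain ⟨φ, hmul, hinv, x₀, hx₀⟩ := hrefl
  have hinjL : ∀ a : A, a ≠ 0 → ∀ {w w' : A}, a * w = a * w' → w = w' :=
    fun a ha {w w'} h => (hdiv a ha).1.injective h
  have hφ1 : φ 1 = 1 := by
    have hne : φ 1 ≠ 0 := by
      intro h
      have h1 := hinv 1
      rw [h, map_zero] at h1
      exact h10 h1.symm
    have he : φ 1 * φ 1 = φ 1 * 1 := by rw [mul_one, ← hmul, one_mul]
    exact hinjL _ hne he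
  set P : Submodule ℝ A := LinearMap.ker (φ.toLinearMap - LinearMap.id) with hPdef
  set M : Submodule ℝ A := LinearMap.ker (φ.toLinearMap + LinearMap.id) with hMdef
  have hPmem : ∀ w : A, w ∈ P ↔ φ w = w := by
    intro w
    simp [hPdef, LinearMap.mem_ker, LinearMap.sub_apply, sub_eq_zero]
  have hMmem : ∀ w : A, w ∈ M ↔ φ w = -w := by
    intro w
    simp [hMdef, LinearMap.mem_ker, LinearMap.add_apply, add_eq_zero_iff_eq_neg]
  set u : A := x₀ - φ x₀ with hudef
  have huM : u ∈ M := by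
    rw [hMmem, hudef, map_sub, hinv, neg_sub]
  have hune : u ≠ 0 := sub_ne_zero.mpr (Ne.symm hx₀)
  -- finrank comparisons via multiplication by u
  have hMP : Module.finrank ℝ M ≤ Module.finrank ℝ P := by
    have hmem : ∀ m : M, ((LinearMap.mulLeft ℝ u).comp M.subtype) m ∈ P := by
      intro m
      rw [hPmem]
      simp only [LinearMap.comp_apply, LinearMap.mulLeft_apply, Submodule.subtype_apply]
      rw [hmul, (hMmem u).mp huM, (hMmem m).mp m.2, neg_mul_neg]
    refine LinearMap.finrank_le_finrank_of_injective
      (f := LinearMap.codRestrict P _ hmem) ?_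
    intro m m' h
    apply Subtype.ext
    have h' : u * (m:A) = u * (m':A) := by
      have := congrArg Subtype.val h
      simpa using this
    exact hinjL u hune h'
  have hPM : Module.finrank ℝ P ≤ Module.finrank ℝ M := by
    have hmem : ∀ a : P, ((LinearMap.mulLeft ℝ u).comp P.subtype) a ∈ M := by
      intro a
      rw [hMmem]
      simp only [LinearMap.comp_apply, LinearMap.mulLeft_apply, Submodule.subtype_apply]
      rw [hmul, (hMmem u).mp huM, (hPmem a).mp a.2, neg_mul]
    refine LinearMap.finrank_le_finrank_of_injective
      (f := LinearMap.codRestrict M _ hmem) ?_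
    intro m m' h
    apply Subtype.ext
    have h' : u * (m:A) = u * (m':A) := by
      have := congrArg Subtype.val h
      simpa using this
    exact hinjL u hune h'
  have hsum : Module.finrank ℝ P + Module.finrank ℝ M = 4 := by
    have hsup : P ⊔ M = ⊤ := by
      rw [eq_top_iff]
      intro w _
      rw [Submodule.mem_sup]
      refine ⟨(1/2:ℝ) • (w + φ w), ?_, (1/2:ℝ) • (w - φ w), ?_, by module⟩
      · rw [hPmem, map_smul, map_add, hinv, add_comm]
      · rw [hMmem, map_smul, map_sub, hinv]
        module
    have hinf : P ⊓ M = ⊥ := by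
      rw [eq_bot_iff]
      intro w hw
      obtain ⟨h1, h2⟩ := Submodule.mem_inf.mp hw
      have hww : w = -w := ((hPmem w).mp h1).symm.trans ((hMmem w).mp h2)
      rw [Submodule.mem_bot]
      exact eq_zero_of_eq_neg hww
    have key := Submodule.finrank_sup_add_finrank_inf_eq P M
    rw [hsup, hinf, finrank_top, finrank_bot, hdim] at key
    omega
  have hPrank : Module.finrank ℝ P = 2 := by omega
  have hMrank : Module.finrank ℝ M = 2 := by omega
  have h1P : (1:A) ∈ P := (hPmem 1).mpr hφ1
  -- find a ∈ P outside span{1}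
  have hcoe : ∀ c d : ℝ, c • (1:A) = d • 1 → c = d := by
    intro c d h
    have h' : (c - d) • (1:A) = 0 := by rw [sub_smul, h, sub_self]
    rcases smul_eq_zero.mp h' with h''|h''
    · linarith [sub_eq_zero.mp (by linarith : c - d = (0:ℝ))]
    · exact absurd h'' h10
  have hex : ∃ a : A, a ∈ P ∧ a ∉ Submodule.span ℝ {(1:A)} := by
    by_contra h
    push_neg at h
    have hle : P ≤ Submodule.span ℝ {(1:A)} := fun w hw => h w hw
    have hm := Submodule.finrank_mono hle
    rw [hPrank, finrank_span_singleton h10] at hm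
    omega
  obtain ⟨a, haP, ha1⟩ := hex
  have hspan1a : Submodule.span ℝ {(1:A), a} = P := by
    apply Submodule.eq_of_le_of_finrank_le
    · rw [Submodule.span_le]
      rintro w hw
      rcases hw with rfl | hw
      · exact h1P
      · rw [Set.mem_singleton_iff] at hw; subst hw; exact haP
    · have hind : LinearIndependent ℝ ![(1:A), a] := by
        rw [LinearIndependent.pair_iff]
        intro s t hst
        rcases eq_or_ne t 0 with rfl|ht
        · rw [zero_smul, add_zero] at hst
          rcases smul_eq_zero.mp hst with h|h
          · exact ⟨h, rfl⟩
          · exact absurd h h10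
        · exfalso
          apply ha1
          have h1 : t • a = (-s) • (1:A) := by
            rw [neg_smul]
            exact eq_neg_of_add_eq_zero_right hst
          have h2 : a = (t⁻¹ * (-s)) • (1:A) := by
            rw [← smul_smul, ← h1, smul_smul, inv_mul_cancel₀ ht, one_smul]
          rw [h2]
          exact Submodule.smul_mem _ _ (Submodule.mem_span_singleton_self 1)
      have hfr := finrank_span_eq_card hind
      rw [Matrix.range_cons_cons_empty] at hfr
      rw [hPrank, hfr]
      simp
  have haaP : a * a ∈ P := (hPmem _).mpr (by rw [hmul, (hPmem a).mp haP])
  rw [← hspan1a] at haaP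
  obtain ⟨α, β, hab⟩ := Submodule.mem_span_pair.mp haaP
  set b : A := a - (β/2) • 1 with hbdef
  set δ : ℝ := α + (β/2)*(β/2) with hδdef
  have hbb : b * b = δ • (1:A) := by
    rw [hbdef]
    simp only [sub_mul, mul_sub, smul_mul_assoc, mul_smul_comm, one_mul, mul_one, smul_smul]
    rw [← hab, hδdef]
    module
  have hbP : b ∈ P := by
    rw [hbdef]
    exact Submodule.sub_mem _ haP (Submodule.smul_mem _ _ h1P)
  have hδneg : δ < 0 := by
    by_contra hc
    push_neg at hc
    set t := Real.sqrt δ with htdef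
    have ht : t * t = δ := Real.mul_self_sqrt hc
    have hfac : (b - t•(1:A)) * (b + t•1) = 0 := by
      have hstep : (b - t•(1:A)) * (b + t•1) = b*b - (t*t)•1 := by
        simp only [sub_mul, mul_add, smul_mul_assoc, mul_smul_comm, one_mul, mul_one, smul_smul]
        module
      rw [hstep, hbb, ht, sub_self]
    have hz : b - t•(1:A) = 0 ∨ b + t•(1:A) = 0 := by
      by_contra hno
      push_neg at hno
      exact hno.2 (hinjL _ hno.1 (by rw [hfac, mul_zero]))
    apply ha1
    rcases hz with h'|h'
    · have : a - ((β/2 + t) • (1:A)) = 0 := by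
        rw [show a - ((β/2 + t) • (1:A)) = b - t•1 by rw [hbdef]; module, h']
      rw [sub_eq_zero.mp this]
      exact Submodule.smul_mem _ _ (Submodule.mem_span_singleton_self 1)
    · have : a - ((β/2 - t) • (1:A)) = 0 := by
        rw [show a - ((β/2 - t) • (1:A)) = b + t•1 by rw [hbdef]; module, h']
      rw [sub_eq_zero.mp this]
      exact Submodule.smul_mem _ _ (Submodule.mem_span_singleton_self 1)
  set s : ℝ := Real.sqrt (-δ) with hsdef
  have hss : s * s = -δ := Real.mul_self_sqrt (by linarith)
  have hsne : s ≠ 0 := by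
    have : 0 < s := Real.sqrt_pos.mpr (by linarith)
    exact this.ne'
  set i : A := s⁻¹ • b with hidef
  have hii : i * i = -1 := by
    have h1 : i * i = (s⁻¹ * s⁻¹ * δ) • (1:A) := by
      rw [hidef, smul_mul_assoc, mul_smul_comm, hbb]
      module
    have hco : s⁻¹ * s⁻¹ * δ = -1 := by
      have hd : δ = -(s*s) := by linarith
      rw [hd]
      field_simp
    rw [h1, hco, neg_smul, one_smul]
  have hiP : i ∈ P := Submodule.smul_mem _ _ hbP
  have hPAi := hPA.2 i hii
  have hL : ∀ w : A, i*(i*w) = -w := by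
    intro w
    have h0 := (hPAi w).1
    simp only [assocator] at h0
    rw [← sub_eq_zero.mp h0, hii, neg_one_mul]
  have hR : ∀ w : A, (w*i)*i = -w := by
    intro w
    have h0 := (hPAi w).2.2
    simp only [assocator] at h0
    rw [sub_eq_zero.mp h0, hii, mul_neg_one]
  have hC : ∀ w : A, (i*w)*i = i*(w*i) := by
    intro w
    have h0 := (hPAi w).2.1
    exact sub_eq_zero.mp h0
  -- P = span {1, i}
  have hspan1i : Submodule.span ℝ {(1:A), i} = P := by
    apply Submodule.eq_of_le_of_finrank_le
    · rw [Submodule.span_le]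
      rintro w hw
      rcases hw with rfl | hw
      · exact h1P
      · rw [Set.mem_singleton_iff] at hw; subst hw; exact hiP
    · have hind : LinearIndependent ℝ ![(1:A), i] := by
        rw [LinearIndependent.pair_iff]
        intro s' t' hst
        rcases eq_or_ne t' 0 with rfl|ht
        · rw [zero_smul, add_zero] at hst
          rcases smul_eq_zero.mp hst with h|h
          · exact ⟨h, rfl⟩
          · exact absurd h h10
        · exfalso
          have h1 : t' • i = (-s') • (1:A) := by
            rw [neg_smul]
            exact eq_neg_of_add_eq_zero_right hst
          have h2 : i = (t'⁻¹ * (-s')) • (1:A) := by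
            rw [← smul_smul, ← h1, smul_smul, inv_mul_cancel₀ ht, one_smul]
          set r := t'⁻¹ * (-s') with hrdef
          have : i * i = (r*r) • (1:A) := by
            rw [h2, smul_mul_assoc, mul_smul_comm, one_mul, smul_smul]
          rw [hii] at this
          have hneg : (-1:ℝ) • (1:A) = (r*r) • 1 := by
            rw [neg_smul, one_smul]; exact this
          have := hcoe _ _ hneg
          nlinarith
      have hfr := finrank_span_eq_card hind
      rw [Matrix.range_cons_cons_empty] at hfr
      rw [hPrank, hfr]
      simp
  have hcommP : ∀ w : A, w ∈ P → i*w = w*i := by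
    intro w hw
    rw [← hspan1i] at hw
    obtain ⟨c, d, hcd⟩ := Submodule.mem_span_pair.mp hw
    rw [← hcd]
    simp only [mul_add, add_mul, mul_smul_comm, smul_mul_assoc, mul_one, one_mul]
  have hMmul : ∀ w w' : A, w ∈ M → w' ∈ M → w*w' ∈ P := by
    intro w w' hw hw'
    rw [hPmem, hmul, (hMmem w).mp hw, (hMmem w').mp hw', neg_mul_neg]
  set j : A := i * u with hjdef
  have hjM : j ∈ M := by
    rw [hMmem, hjdef, hmul, (hPmem i).mp hiP, (hMmem u).mp huM, mul_neg]
  have hij : i * j = -u := by rw [hjdef]; exact hL u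
  have hindep : ∀ c d : ℝ, c•u + d•j = 0 → c = 0 ∧ d = 0 := by
    intro c d hcd
    have h2 : c•j - d•u = 0 := by
      have h3 := congrArg (fun w => i * w) hcd
      simp only [mul_add, mul_smul_comm, mul_zero] at h3
      rw [← hjdef, hij] at h3
      rw [← h3]
      module
    have hcu : (c*c + d*d) • u = 0 := by
      calc (c*c + d*d) • u = c • (c•u + d•j) - d • (c•j - d•u) := by module
      _ = 0 := by rw [hcd, h2, smul_zero, smul_zero, sub_zero]
    have hzero : c*c + d*d = 0 := by
      rcases smul_eq_zero.mp hcu with h|h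
      · exact h
      · exact absurd h hune
    constructor <;> nlinarith
  have hspanuj : Submodule.span ℝ {u, j} = M := by
    apply Submodule.eq_of_le_of_finrank_le
    · rw [Submodule.span_le]
      rintro w hw
      rcases hw with rfl | hw
      · exact huM
      · rw [Set.mem_singleton_iff] at hw; subst hw; exact hjM
    · have hind : LinearIndependent ℝ ![u, j] := by
        rw [LinearIndependent.pair_iff]
        exact fun s t hst => hindep s t hst
      have hfr := finrank_span_eq_card hind
      rw [Matrix.range_cons_cons_empty] at hfr
      rw [hMrank, hfr]
      simp
  have huiM : u * i ∈ M := by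
    rw [hMmem, hmul, (hMmem u).mp huM, (hPmem i).mp hiP, neg_mul]
  rw [← hspanuj] at huiM
  obtain ⟨a2, β2, hui0⟩ := Submodule.mem_span_pair.mp huiM
  have hji : j * i = a2 • j - β2 • u := by
    have h1 : j * i = i * (u * i) := by rw [hjdef]; exact hC u
    rw [h1, ← hui0, mul_add, mul_smul_comm, mul_smul_comm, ← hjdef, hij]
    module
  have hRu := hR u
  have hexp : (a2*a2 - β2*β2)•u + (a2*β2 + a2*β2)•j = -u := by
    calc (a2*a2 - β2*β2)•u + (a2*β2 + a2*β2)•j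
        = a2•(a2•u + β2•j) + β2•(a2•j - β2•u) := by module
      _ = a2•(u*i) + β2•(j*i) := by rw [hui0, hji]
      _ = (a2•u + β2•j)*i := by rw [add_mul, smul_mul_assoc, smul_mul_assoc]
      _ = (u*i)*i := by rw [hui0]
      _ = -u := hRu
  have hco2 : (a2*a2 - β2*β2 + 1) • u + (a2*β2 + a2*β2) • j = 0 := by
    calc (a2*a2 - β2*β2 + 1) • u + (a2*β2 + a2*β2) • j
        = ((a2*a2 - β2*β2)•u + (a2*β2 + a2*β2)•j) + u := by module
      _ = -u + u := by rw [hexp]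
      _ = 0 := neg_add_cancel u
  obtain ⟨e1, e2⟩ := hindep _ _ hco2
  have ha2 : a2 = 0 := by
    have hb2 : a2 * β2 = 0 := by linarith
    rcases mul_eq_zero.mp hb2 with h|h
    · exact h
    · exfalso; rw [h] at e1; nlinarith
  have hui : u * i = β2 • j := by rw [← hui0, ha2, zero_smul, zero_add]
  have hji' : j * i = -(β2 • u) := by rw [hji, ha2, zero_smul, zero_sub]
  have hq : i*(u*j) = (u*j)*i := hcommP _ (hMmul u j huM hjM)
  have hr : i*(j*u) = (j*u)*i := hcommP _ (hMmul j u hjM huM)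
  have hFiuj : Fsum i u j = 0 := Fsum_core i u j β2 hjdef.symm hij hui hji' hq hr
  have hFiju : Fsum i j u = 0 := by rw [Fsum_swap23, hFiuj, neg_zero]
  have hFuij : Fsum u i j = 0 := by rw [Fsum_swap12, hFiuj, neg_zero]
  have hFuji : Fsum u j i = 0 := by rw [Fsum_swap23, hFuij, neg_zero]
  have hFjiu : Fsum j i u = 0 := by rw [Fsum_swap12, hFiju, neg_zero]
  have hFjui : Fsum j u i = 0 := by rw [Fsum_swap12, hFuji, neg_zero]
  -- decomposition
  have hdecomp : ∀ w : A, ∃ c1 c2 c3 c4 : ℝ, w = c1•(1:A) + c2•i + c3•u + c4•j := by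
    intro w
    have hP' : (1/2:ℝ) • (w + φ w) ∈ P := by
      rw [hPmem, map_smul, map_add, hinv, add_comm]
    have hM' : (1/2:ℝ) • (w - φ w) ∈ M := by
      rw [hMmem, map_smul, map_sub, hinv]
      module
    rw [← hspan1i] at hP'
    rw [← hspanuj] at hM'
    obtain ⟨c1, c2, h12⟩ := Submodule.mem_span_pair.mp hP'
    obtain ⟨c3, c4, h34⟩ := Submodule.mem_span_pair.mp hM'
    refine ⟨c1, c2, c3, c4, ?_⟩
    have hw : w = (1/2:ℝ) • (w + φ w) + (1/2:ℝ) • (w - φ w) := by module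
    rw [hw, ← h12, ← h34]
    abel
  intro p q r
  obtain ⟨c1, c2, c3, c4, hp⟩ := hdecomp p
  obtain ⟨d1, d2, d3, d4, hq'⟩ := hdecomp q
  obtain ⟨e1', e2', e3', e4', hr'⟩ := hdecomp r
  rw [hp, hq', hr']
  simp only [Fsum_add1, Fsum_add2, Fsum_add3, Fsum_smul1, Fsum_smul2, Fsum_smul3]
  simp [hFiuj, hFiju, hFuij, hFuji, hFjiu, hFjui]
end

section
/- Let A be a real nonassociative algebra with unit having a basis {1, i, w, v} satisfying table (Tp), let [x, y] = xy − yx, and write [v, w] = α·1 + β·i with α, β ∈ ℝ. If α = 0 and β = 0, then there exists a basis {z, h, x, y} of A with z = 1 such that [z, h] = [z, x] = [z, y] = 0, [x, y] = 0, [h, x] = y, and [h, y] = −x; that is, (A, [·,·]) is isomorphic to the direct sum of a one-dimensional Lie algebra and the solvable Lie algebra 𝔤_{3,5} (with parameter 0). -/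
/-! The Lie algebra `𝔤_{3,5}` appears after rescaling `i`: the table gives `[i, w] = -2v` and
`[i, v] = 2w`, so `h = -½ i` acts on `span{w, v}` as the rotation `w ↦ v ↦ -w`, while
`[w, v] = -(α + β i) = 0` and the unit `1` is central. -/

theorem Module.Basis.exists_apply_eq_smul_of_isUnit {ι R M : Type*} [DecidableEq ι] [Semiring R]
    [AddCommMonoid M] [Module R M] (B : Module.Basis ι R M) (j : ι) {c : R} (hc : IsUnit c) :
    ∃ B' : Module.Basis ι R M, B' j = c • B j ∧ ∀ k ≠ j, B' k = B k := by
  refine ⟨B.unitsSMul (Function.update 1 j hc.unit), ?_, fun k hk => ?_⟩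
  · simp [Module.Basis.unitsSMul_apply, Units.smul_def]
  · simp [Module.Basis.unitsSMul_apply, hk]

theorem smul_mul_sub_mul_smul {R A : Type*} [Semiring R] [NonUnitalNonAssocRing A] [Module R A]
    [SMulCommClass R A A] [IsScalarTower R A A] (c : R) (a b : A) :
    c • a * b - b * c • a = c • (a * b - b * a) := by
  rw [smul_mul_assoc, mul_smul_comm, smul_sub]

theorem lie_g35_of_alpha_zero_beta_zero_general {A : Type*} [NonAssocRing A] [Module ℝ A]
    [SMulCommClass ℝ A A] [IsScalarTower ℝ A A]
    (B : Module.Basis (Fin 4) ℝ A) (i w v : A)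
    (hB0 : B 0 = 1) (hB1 : B 1 = i) (hB2 : B 2 = w) (hB3 : B 3 = v)
    (hiw : i * w = -v) (hiv : i * v = w)
    (hwi : w * i = v) (hvi : v * i = -w)
    (α β : ℝ) (hvw' : v * w - w * v = α • (1 : A) + β • i)
    (hα : α = 0) (hβ : β = 0) :
    ∃ (B' : Module.Basis (Fin 4) ℝ A) (h x y : A),
      B' 0 = 1 ∧ B' 1 = h ∧ B' 2 = x ∧ B' 3 = y ∧
      (1 : A) * h - h * 1 = 0 ∧ (1 : A) * x - x * 1 = 0 ∧ (1 : A) * y - y * 1 = 0 ∧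
      x * y - y * x = 0 ∧ h * x - x * h = y ∧ h * y - y * h = -x := by
  subst hα hβ
  obtain ⟨B', hB'1, hB'_ne⟩ :=
    B.exists_apply_eq_smul_of_isUnit 1 (c := -(1 / 2)) (by norm_num)
  refine ⟨B', (-(1 / 2) : ℝ) • i, w, v, by rw [hB'_ne 0 (by decide), hB0], by rw [hB'1, hB1],
    by rw [hB'_ne 2 (by decide), hB2], by rw [hB'_ne 3 (by decide), hB3],
    by simp, by simp, by simp, ?_, ?_, ?_⟩
  · rw [← neg_sub, hvw']
    simp
  · rw [smul_mul_sub_mul_smul, hiw, hwi]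
    module
  · rw [smul_mul_sub_mul_smul, hiv, hvi]
    module

/-- For a real nonassociative unital algebra `A` with basis `{1, i, w, v}` satisfying table
`(Tp)` and `[v, w] = α•1 + β•i`: if `α = 0` and `β = 0`, then there is a basis
`{z, h, x, y}` of `A` with `z = 1`, `[z,·] = 0`, `[x, y] = 0`, `[h, x] = y`, `[h, y] = -x`;
that is, `(A, [·,·]) ≅ 𝔤₁ ⊕ 𝔤_{3,5}` (with parameter `0`). -/
theorem lie_g35_of_alpha_zero_beta_zero {A : Type*} [NonAssocRing A] [Module ℝ A]
    [SMulCommClass ℝ A A] [IsScalarTower ℝ A A]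
    (B : Module.Basis (Fin 4) ℝ A) (i w v : A)
    (hB0 : B 0 = 1) (hB1 : B 1 = i) (hB2 : B 2 = w) (hB3 : B 3 = v)
    (hii : i * i = -1) (hiw : i * w = -v) (hiv : i * v = w)
    (hwi : w * i = v) (hvi : v * i = -w)
    (hww : w * w ∈ Submodule.span ℝ ({1, i} : Set A))
    (hwv : w * v ∈ Submodule.span ℝ ({1, i} : Set A))
    (hvw : v * w ∈ Submodule.span ℝ ({1, i} : Set A))
    (hvv : v * v ∈ Submodule.span ℝ ({1, i} : Set A))
    (α β : ℝ) (hvw' : v * w - w * v = α • (1 : A) + β • i)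
    (hα : α = 0) (hβ : β = 0) :
    ∃ (B' : Module.Basis (Fin 4) ℝ A) (h x y : A),
      B' 0 = 1 ∧ B' 1 = h ∧ B' 2 = x ∧ B' 3 = y ∧
      (1 : A) * h - h * 1 = 0 ∧ (1 : A) * x - x * 1 = 0 ∧ (1 : A) * y - y * 1 = 0 ∧
      x * y - y * x = 0 ∧ h * x - x * h = y ∧ h * y - y * h = -x :=
  lie_g35_of_alpha_zero_beta_zero_general B i w v hB0 hB1 hB2 hB3 hiw hiv hwi hvi α β hvw' hα hβ
end
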